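/- arXiv:1107.0248 — 6 statements merged into one kernel-verified Lean document; each statement's English description precedes it below -/
import Mathlib

section
/- Let A = (a_{i,j}) be a lower triangular n×n matrix over a field k, let C be the n×n matrix with entries c_{i,j} = 1 for i ≤ j and 0 otherwise, and set D = A·C. Then for every r ≥ 1 and every strictly increasing sequence 1 ≤ i_1 < i_2 < … < i_r ≤ n (with the convention i_0 = 0), the determinant of the r×r submatrix of D formed by the rows and columns with indices i_1, …, i_r equals the product over h = 1, …, r of the sums a_{i_h, i_{h-1}+1} + a_{i_h, i_{h-1}+2} + … + a_{i_h, i_h}. -/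
/-!
Column `f h` of `A * C` holds the partial row sums `∑_{l ≤ f h} A i l`. Splitting the range
`l ≤ f h` into the gaps `f (h' - 1) < l ≤ f h'`, `h' ≤ h`, factors the principal minor as `M * C'`,
where `C'` is the `r × r` analogue of `C` and `M g h` is the sum of `A (f g) l` over the `h`-th gap.
Every column of the `h`-th gap exceeds `f g` for `g < h`, so `M` is lower triangular when `A` is;
since `det C' = 1`, the minor is the product of the diagonal entries of `M`.
-/

open Finset Function Matrix

section GapBlock

variable {ι κ : Type*} [LinearOrder ι] [Fintype ι] [LinearOrder κ] [Fintype κ]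

/-- The columns `j` with `f h' < j ≤ f h` for all `h' < h`; for strictly increasing `f` this is
the paper's range `i_{h-1}+1, …, i_h`. -/
def gapBlock (f : κ → ι) (h : κ) : Finset ι :=
  univ.filter fun j => j ≤ f h ∧ ∀ h' : κ, h' < h → f h' < j

theorem mem_gapBlock {f : κ → ι} {h : κ} {j : ι} :
    j ∈ gapBlock f h ↔ j ≤ f h ∧ ∀ h', h' < h → f h' < j := by
  simp [gapBlock]

theorem pairwise_disjoint_gapBlock (f : κ → ι) : Pairwise (Disjoint on gapBlock f) := by
  have hlt : ∀ h₁ h₂, h₁ < h₂ → Disjoint (gapBlock f h₁) (gapBlock f h₂) :=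
    fun h₁ h₂ hlt => disjoint_left.mpr fun j hj₁ hj₂ =>
      ((mem_gapBlock.mp hj₁).1.trans_lt ((mem_gapBlock.mp hj₂).2 h₁ hlt)).false
  intro h₁ h₂ hne
  rcases hne.lt_or_gt with h | h
  exacts [hlt _ _ h, (hlt _ _ h).symm]

theorem biUnion_Iic_gapBlock [LocallyFiniteOrderBot κ] {f : κ → ι} (hf : Monotone f) (h : κ) :
    (Iic h).biUnion (gapBlock f) = univ.filter (· ≤ f h) := by
  ext j
  simp only [mem_biUnion, mem_Iic, mem_filter, mem_univ, true_and]
  constructor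
  · rintro ⟨h', hh', hj⟩
    exact (mem_gapBlock.mp hj).1.trans (hf hh')
  · intro hj
    -- `j` lies in the block of the first `h'` with `j ≤ f h'`
    set T := univ.filter fun h' => j ≤ f h'
    have hT : T.Nonempty := ⟨h, by simp [T, hj]⟩
    have hmin := mem_filter.mp (T.min'_mem hT)
    refine ⟨T.min' hT, T.min'_le h (by simp [T, hj]), mem_gapBlock.mpr ⟨hmin.2, fun h' hlt => ?_⟩⟩
    by_contra hle
    exact (T.min'_le h' (by simpa [T] using hle)).not_gt hlt

end GapBlock

def upperOnes (ι R : Type*) [LE ι] [DecidableLE ι] [Zero R] [One R] : Matrix ι ι R :=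
  of fun i j => if i ≤ j then 1 else 0

section UpperOnes

variable {ι : Type*} [LinearOrder ι] [Fintype ι]

theorem mul_upperOnes_apply {m R : Type*} [NonAssocSemiring R] (B : Matrix m ι R) (i : m)
    (j : ι) : (B * upperOnes ι R) i j = ∑ l ∈ univ.filter (· ≤ j), B i l := by
  simp [upperOnes, mul_apply, sum_filter]

theorem det_upperOnes (R : Type*) [CommRing R] : (upperOnes ι R).det = 1 := by
  rw [det_of_isUpperTriangular (M := upperOnes ι R) fun i j (hlt : j < i) => if_neg hlt.not_ge]
  simp [upperOnes]

end UpperOnes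

section Factorization

variable {ι κ m R : Type*} [LinearOrder ι] [Fintype ι] [LinearOrder κ] [Fintype κ]
  [NonAssocSemiring R]

def gapBlockSums (A : Matrix m ι R) (f : κ → ι) : Matrix m κ R :=
  of fun g h => ∑ j ∈ gapBlock f h, A g j

theorem mul_upperOnes_submatrix [LocallyFiniteOrderBot κ] {f : κ → ι} (hf : Monotone f)
    (A : Matrix m ι R) {m' : Type*} (e : m' → m) :
    (A * upperOnes ι R).submatrix e f = gapBlockSums (A.submatrix e id) f * upperOnes κ R := by
  ext g h
  rw [submatrix_apply, mul_upperOnes_apply, mul_upperOnes_apply, ← biUnion_Iic_gapBlock hf,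
    sum_biUnion ((pairwise_disjoint_gapBlock f).set_pairwise _), filter_ge_eq_Iic]
  rfl

theorem isLowerTriangular_gapBlockSums {A : Matrix ι ι R} (hA : A.IsLowerTriangular)
    (f : κ → ι) : (gapBlockSums (A.submatrix f id) f).IsLowerTriangular :=
  fun g h (hlt : g < h) => sum_eq_zero fun _ hj => hA ((mem_gapBlock.mp hj).2 g hlt)

end Factorization

theorem stmt0_general {k : Type*} [Field k] {n r : ℕ}
    (A : Matrix (Fin n) (Fin n) k)
    (hA : ∀ i j : Fin n, i < j → A i j = 0)
    (f : Fin r → Fin n) (hf : StrictMono f) :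
    ((A * Matrix.of (fun i j : Fin n => if i ≤ j then (1 : k) else 0)).submatrix f f).det
      = ∏ h : Fin r,
          ∑ j ∈ Finset.univ.filter
              (fun j : Fin n => j ≤ f h ∧ ∀ h' : Fin r, h' < h → f h' < j),
            A (f h) j := by
  have hC : of (fun i j : Fin n => if i ≤ j then (1 : k) else 0) = upperOnes (Fin n) k := rfl
  rw [hC, mul_upperOnes_submatrix hf.monotone, det_mul, det_upperOnes, mul_one,
    det_of_isLowerTriangular _ (isLowerTriangular_gapBlockSums (fun i j hij => hA i j hij) f)]
  refine prod_congr rfl fun h _ => ?_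
  -- `gapBlock` carries the generic decidability instances, the statement those of `Fin`
  show ∑ j ∈ gapBlock f h, A (f h) j = _
  congr 1
  ext j
  simp [mem_gapBlock]

theorem stmt0 {k : Type*} [Field k] {n r : ℕ} (hr : 1 ≤ r)
    (A : Matrix (Fin n) (Fin n) k)
    (hA : ∀ i j : Fin n, i < j → A i j = 0)
    (f : Fin r → Fin n) (hf : StrictMono f) :
    ((A * Matrix.of (fun i j : Fin n => if i ≤ j then (1 : k) else 0)).submatrix f f).det
      = ∏ h : Fin r,
          ∑ j ∈ Finset.univ.filter
              (fun j : Fin n => j ≤ f h ∧ ∀ h' : Fin r, h' < h → f h' < j),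
            A (f h) j :=
  stmt0_general A hA f hf
end

section
/- Let A = (a_{i,j}) and A' = (a'_{i,j}) be lower triangular n×n matrices over a field k, let C be the n×n matrix with entries c_{i,j} = 1 for i ≤ j and 0 otherwise, and for a lower triangular matrix X set P_r(X) to be the sum, over all r-element subsets {i_1 < … < i_r} of {1, …, n}, of the determinant of the principal minor of X·C with rows and columns i_1, …, i_r (up to sign, P_r(X) is the coefficient of t^{n-r} in the characteristic polynomial of X·C). If a_{h,k} = a'_{h,k} for all pairs (h,k) with k ≤ h and n − h + k ≥ r, then P_r(A) = P_r(A'). In other words, P_r does not depend on the entries a_{h,k} with n − h + k < r. -/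
/-!
STATEMENT 1: For a lower triangular matrix `X`, `P_r X` is the sum of all principal `r × r`
minors of `X * C`, where `C` is the matrix with `c i j = 1` for `i ≤ j` and `0` otherwise
(up to sign, the coefficient of `t^{n-r}` in the characteristic polynomial of `X * C`).
If two lower triangular matrices `A, A'` agree on all entries `(h, k)` (1-indexed) with
`k ≤ h` and `n - h + k ≥ r`, then `P_r A = P_r A'`; i.e. `P_r` does not depend on the
entries `a_{h,k}` with `n - h + k < r`.
In `0`-indexed form, the position `(i, j)` corresponds to `(h, k) = (i+1, j+1)`.
-/

/-- The upper triangular all-ones matrix `C`. -/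
def Cmat (k : Type*) [Field k] (n : ℕ) : Matrix (Fin n) (Fin n) k :=
  Matrix.of fun i j => if i ≤ j then 1 else 0

/-- `Pcoeff r A` is the sum of all principal `r × r` minors of `A * C`. -/
noncomputable def Pcoeff {k : Type*} [Field k] {n : ℕ} (r : ℕ)
    (A : Matrix (Fin n) (Fin n) k) : k :=
  ∑ s ∈ (Finset.univ : Finset (Fin n)).powersetCard r,
    ((A * Cmat k n).submatrix (fun i : Fin s.card => s.orderEmbOfFin rfl i)
      (fun i : Fin s.card => s.orderEmbOfFin rfl i)).det

/-!
For `i₁ < ⋯ < iᵣ`, the principal minor of `A * C` on these indices is `B * C`, where `C` is now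
`r × r` and column `u` of `B` is the difference of columns `iᵤ` and `iᵤ₋₁` of `A * C`, i.e.
`B t u = ∑_{iᵤ₋₁ < l ≤ iᵤ} a_{i_t, l}`. Since `A` is lower triangular, so is `B`, hence the minor
is `∏ₜ B t t`. Every entry `a_{i_t, l}` occurring there has `t ≤ l` and `i_t ≤ n - r + t`
(0-indexed), so `n - i_t + l ≥ r`.
-/

open Finset

section Cmat

variable {k : Type*} [Field k] {m n : ℕ}

lemma mul_Cmat_apply {ι : Type*} (A : Matrix ι (Fin n) k) (i : ι) (j : Fin n) :
    (A * Cmat k n) i j = ∑ l ∈ Iic j, A i l := by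
  simp only [Matrix.mul_apply, Cmat, Matrix.of_apply, mul_ite, mul_one, mul_zero]
  rw [← sum_filter, filter_ge_eq_Iic]

lemma det_Cmat : (Cmat k m).det = 1 := by
  have hupper : (Cmat k m).IsUpperTriangular := fun i j (hji : j < i) => by
    simp [Cmat, not_le.mpr hji]
  rw [Matrix.det_of_isUpperTriangular hupper]
  simp [Cmat]

end Cmat

/-- The interval `(f (u - 1), f u]` for monotone `f`, with `f (-1) = -∞`. -/
def block {m n : ℕ} (f : Fin m → Fin n) (u : Fin m) : Finset (Fin n) :=
  univ.filter fun l => l ≤ f u ∧ ∀ v < u, f v < l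

section block

variable {m n : ℕ} {f : Fin m → Fin n}

lemma pairwiseDisjoint_block (s : Set (Fin m)) : s.PairwiseDisjoint (block f) := by
  intro v _ w _ hvw
  rw [Function.onFun, Finset.disjoint_left]
  intro l hv hw
  simp only [block, mem_filter, mem_univ, true_and] at hv hw
  rcases lt_or_gt_of_ne hvw with h | h
  · exact (hw.2 v h).not_ge hv.1
  · exact (hv.2 w h).not_ge hw.1

lemma biUnion_block (hf : Monotone f) (u : Fin m) :
    (Iic u).biUnion (block f) = Iic (f u) := by
  ext l
  simp only [mem_biUnion, mem_Iic, block, mem_filter, mem_univ, true_and]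
  constructor
  · rintro ⟨v, hvu, hlv, -⟩
    exact hlv.trans (hf hvu)
  · intro hlu
    obtain ⟨v, hv, hmin⟩ := (univ.filter fun v => l ≤ f v).exists_min_image id
      ⟨u, by simpa using hlu⟩
    simp only [mem_filter, mem_univ, true_and, id] at hv hmin
    exact ⟨v, hmin u hlu, hv, fun w hwv => not_le.mp fun h => (hmin w h).not_gt hwv⟩

lemma sum_Iic_sum_block (hf : Monotone f) {M : Type*} [AddCommMonoid M] (g : Fin n → M)
    (u : Fin m) : ∑ v ∈ Iic u, ∑ l ∈ block f v, g l = ∑ l ∈ Iic (f u), g l := by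
  rw [← biUnion_block hf, sum_biUnion (pairwiseDisjoint_block _)]

lemma le_of_mem_block (hf : StrictMono f) {u : Fin m} {l : Fin n} (hl : l ∈ block f u) :
    (u : ℕ) ≤ l := by
  have hmaps : Set.MapsTo f (Iio u) (Iio l) := fun v hv => by
    simp only [block, mem_filter, mem_univ, true_and] at hl
    simpa using hl.2 v (by simpa using hv)
  simpa using card_le_card_of_injOn f hmaps hf.injective.injOn

lemma val_add_sub_le (hf : StrictMono f) (u : Fin m) : (f u : ℕ) + (m - u) ≤ n := by
  have hmaps : Set.MapsTo f (Ici u) (Ici (f u)) := fun v hv => by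
    simpa using hf.monotone (by simpa using hv)
  have := card_le_card_of_injOn f hmaps hf.injective.injOn
  simp only [Fin.card_Ici] at this
  omega

end block

section principalMinor

variable {k : Type*} [Field k] {m n : ℕ}

lemma submatrix_mul_Cmat {f : Fin m → Fin n} (hf : Monotone f) (A : Matrix (Fin n) (Fin n) k) :
    (A * Cmat k n).submatrix f f
      = Matrix.of (fun t u => ∑ l ∈ block f u, A (f t) l) * Cmat k m := by
  ext t u
  rw [Matrix.submatrix_apply, mul_Cmat_apply, mul_Cmat_apply, ← sum_Iic_sum_block hf]
  rfl

lemma det_submatrix_mul_Cmat {A : Matrix (Fin n) (Fin n) k}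
    (hA : A.IsLowerTriangular) {f : Fin m → Fin n} (hf : Monotone f) :
    ((A * Cmat k n).submatrix f f).det = ∏ t, ∑ l ∈ block f t, A (f t) l := by
  have hlower : (Matrix.of fun t u => ∑ l ∈ block f u, A (f t) l).IsLowerTriangular :=
    fun t u htu => by
      rw [Matrix.of_apply]
      exact sum_eq_zero fun l hl => hA ((mem_filter.mp hl).2.2 t htu)
  rw [submatrix_mul_Cmat hf, Matrix.det_mul, Matrix.det_of_isLowerTriangular _ hlower,
    det_Cmat, mul_one]
  rfl

end principalMinor

theorem stmt1 {k : Type*} [Field k] {n r : ℕ}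
    (A A' : Matrix (Fin n) (Fin n) k)
    (hA : ∀ i j : Fin n, i < j → A i j = 0)
    (hA' : ∀ i j : Fin n, i < j → A' i j = 0)
    (hagree : ∀ i j : Fin n, j ≤ i → r ≤ n - (i.val + 1) + (j.val + 1) → A i j = A' i j) :
    Pcoeff r A = Pcoeff r A' := by
  refine sum_congr rfl fun s hs => ?_
  have hcard : s.card = r := (mem_powersetCard.mp hs).2
  have hf := (s.orderEmbOfFin rfl).strictMono
  rw [det_submatrix_mul_Cmat hA hf.monotone, det_submatrix_mul_Cmat hA' hf.monotone]
  refine prod_congr rfl fun t _ => sum_congr rfl fun l hl => hagree _ _ ?_ ?_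
  · exact (mem_filter.mp hl).2.1
  · have := le_of_mem_block hf hl
    have := val_add_sub_le hf t
    omega
end

section
/- Let A = (a_{i,j}) be a lower triangular n×n matrix over a field k, let C be the n×n matrix with entries c_{i,j} = 1 for i ≤ j and 0 otherwise, and let P_r denote the sum of all principal r×r minors of A·C. Fix a pair (h,k) with k ≤ h and n − h + k = r. Then P_r depends affinely (i.e., linearly up to a constant) on the entry a_{h,k}, with linear coefficient equal to (∏_{t=1}^{k-1} a_{t,t})·(∏_{t=h+1}^{n} a_{t,t}). Precisely, if A_x denotes the matrix obtained from A by replacing the (h,k) entry with x, then for all x, y ∈ k one has P_r(A_x) − P_r(A_y) = (x − y)·(∏_{t=1}^{k-1} a_{t,t})·(∏_{t=h+1}^{n} a_{t,t}). -/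
/-- Column-operations determinant lemma: if subtracting each previous column makes `M`
lower triangular, the determinant is the product of the new diagonal. -/
lemma det_eq_prod_of_colops {R : Type*} [CommRing R] {c : ℕ} (M M' : Matrix (Fin c) (Fin c) R)
    (hM' : ∀ t s : Fin c, M' t s =
      M t s - (if h : (s : ℕ) = 0 then 0 else M t ⟨(s : ℕ) - 1, by omega⟩))
    (htri : ∀ t s : Fin c, t < s → M' t s = 0) :
    M.det = ∏ t, M' t t := by
  classical
  set L : Matrix (Fin c) (Fin c) R := fun j s =>
    (if j = s then 1 else 0) - (if (j : ℕ) + 1 = (s : ℕ) then 1 else 0) with hL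
  have hML : M * L = M' := by
    ext t s
    rw [Matrix.mul_apply]
    have : ∀ j : Fin c, M t j * L j s =
        (if j = s then M t j else 0) - (if (j : ℕ) + 1 = (s : ℕ) then M t j else 0) := by
      intro j
      by_cases h1 : j = s <;> by_cases h2 : (j : ℕ) + 1 = (s : ℕ) <;>
        simp [hL, h1, h2, mul_sub]
    rw [Finset.sum_congr rfl fun j _ => this j, Finset.sum_sub_distrib]
    rw [Finset.sum_ite_eq' Finset.univ s (fun j => M t j)]
    simp only [Finset.mem_univ, if_true]
    rw [hM' t s]
    congr 1
    by_cases hs : (s : ℕ) = 0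
    · rw [dif_pos hs]
      apply Finset.sum_eq_zero
      intro j _
      rw [if_neg]; omega
    · rw [dif_neg hs]
      rw [Finset.sum_eq_single (⟨(s : ℕ) - 1, by omega⟩ : Fin c)]
      · rw [if_pos (by simp; omega)]
      · intro j _ hj
        rw [if_neg]
        intro h
        apply hj
        apply Fin.ext
        simp
        omega
      · intro h; exact absurd (Finset.mem_univ _) h
  have hdetL : L.det = 1 := by
    have : L.BlockTriangular id := by
      intro i j hij
      have : (j : ℕ) < (i : ℕ) := hij
      simp only [hL]
      rw [if_neg (by intro h; subst h; omega), if_neg (by omega)]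
      ring
    rw [Matrix.det_of_upperTriangular this]
    apply Finset.prod_eq_one
    intro i _
    simp [hL]
  have htriM' : M'.BlockTriangular OrderDual.toDual := fun i j hij =>
    htri i j (OrderDual.toDual_lt_toDual.mp hij)
  calc M.det = M.det * L.det := by rw [hdetL, mul_one]
    _ = (M * L).det := (Matrix.det_mul M L).symm
    _ = M'.det := by rw [hML]
    _ = ∏ t, M' t t := Matrix.det_of_lowerTriangular M' htriM'

section helpers

variable {k : Type*} [Field k] {n : ℕ}

lemma AC_apply (A : Matrix (Fin n) (Fin n) k) (i j : Fin n) :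
    (A * Cmat k n) i j = ∑ l, A i l * (if l ≤ j then 1 else 0) := by
  simp [Matrix.mul_apply, Cmat]

lemma AC_const (A : Matrix (Fin n) (Fin n) k) (hA : ∀ i j : Fin n, i < j → A i j = 0)
    {i j : Fin n} (hij : i ≤ j) : (A * Cmat k n) i j = ∑ l, A i l := by
  rw [AC_apply]
  refine Finset.sum_congr rfl fun l _ => ?_
  by_cases h : l ≤ j
  · rw [if_pos h, mul_one]
  · rw [if_neg h, mul_zero, hA i l (lt_of_le_of_lt hij (not_le.mp h))]

lemma AC_step (A : Matrix (Fin n) (Fin n) k) {i j j' : Fin n} (hj' : (j' : ℕ) + 1 = (j : ℕ)) :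
    (A * Cmat k n) i j = (A * Cmat k n) i j' + A i j := by
  rw [AC_apply, AC_apply]
  have : ∀ l : Fin n, A i l * (if l ≤ j then 1 else 0) =
      A i l * (if l ≤ j' then 1 else 0) + (if l = j then A i l else 0) := by
    intro l
    by_cases h1 : l ≤ j'
    · have h2 : l ≤ j := by rw [Fin.le_def] at h1 ⊢; omega
      have h3 : l ≠ j := by intro h; subst h; rw [Fin.le_def] at h1; omega
      rw [if_pos h1, if_pos h2, if_neg h3, add_zero]
    · by_cases h2 : l = j
      · subst h2
        rw [if_pos le_rfl, if_neg h1, if_pos rfl, mul_zero, zero_add, mul_one]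
      · have h3 : ¬ l ≤ j := by
          rw [Fin.le_def] at h1 ⊢
          rw [Fin.ext_iff] at h2
          omega
        rw [if_neg h1, if_neg h2, if_neg h3, mul_zero, add_zero]
  rw [Finset.sum_congr rfl fun l _ => this l, Finset.sum_add_distrib,
    Finset.sum_ite_eq' Finset.univ j (fun l => A i l)]
  simp

end helpers

section mu

variable {k : Type*} [Field k] {n : ℕ}

/-- The updated submatrix whose determinant is the linear coefficient contribution of `S`. -/
noncomputable def Mu (A : Matrix (Fin n) (Fin n) k) (q : Fin n) (S : Finset (Fin n))
    (m : Fin S.card) : Matrix (Fin S.card) (Fin S.card) k :=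
  Matrix.updateRow
    ((A * Cmat k n).submatrix (fun i : Fin S.card => S.orderEmbOfFin rfl i)
      (fun i : Fin S.card => S.orderEmbOfFin rfl i)) m
    (fun s => if q ≤ S.orderEmbOfFin rfl s then 1 else 0)

lemma Mu_det (A : Matrix (Fin n) (Fin n) k) (hA : ∀ i j : Fin n, i < j → A i j = 0)
    (p q : Fin n) (hqp : q ≤ p) (S : Finset (Fin n)) (m : Fin S.card)
    (hm : S.orderEmbOfFin rfl m = p) :
    (Mu A q S m).det = ∏ t : Fin S.card,
      (Mu A q S m t t - if h : (t : ℕ) = 0 then 0 else Mu A q S m t ⟨(t : ℕ) - 1, by omega⟩) := by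
  apply det_eq_prod_of_colops _ _ (fun t s => rfl)
  intro t s hts
  have hs0 : (s : ℕ) ≠ 0 := by
    have := hts
    rw [Fin.lt_def] at this
    omega
  rw [dif_neg hs0]
  have hmono := (S.orderEmbOfFin (rfl : S.card = S.card)).monotone
  by_cases htm : t = m
  · subst htm
    simp only [Mu, Matrix.updateRow_self]
    have h1 : q ≤ S.orderEmbOfFin rfl s := by
      refine le_trans hqp ?_
      rw [← hm]
      exact hmono (le_of_lt hts)
    have h2 : q ≤ S.orderEmbOfFin rfl ⟨(s : ℕ) - 1, by omega⟩ := by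
      refine le_trans hqp ?_
      rw [← hm]
      apply hmono
      rw [Fin.le_def]
      simp only []
      rw [Fin.lt_def] at hts
      omega
    rw [if_pos h1, if_pos h2, sub_self]
  · simp only [Mu, Matrix.updateRow_ne htm, Matrix.submatrix_apply]
    have h1 : S.orderEmbOfFin rfl t ≤ S.orderEmbOfFin rfl s := hmono (le_of_lt hts)
    have h2 : S.orderEmbOfFin rfl t ≤ S.orderEmbOfFin rfl ⟨(s : ℕ) - 1, by omega⟩ := by
      apply hmono
      rw [Fin.le_def]
      simp only []
      rw [Fin.lt_def] at hts
      omega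
    rw [AC_const A hA h1, AC_const A hA h2, sub_self]

lemma Mu_vanish (A : Matrix (Fin n) (Fin n) k) (hA : ∀ i j : Fin n, i < j → A i j = 0)
    (p q : Fin n) (hqp : q ≤ p) (S : Finset (Fin n)) (m : Fin S.card)
    (hm : S.orderEmbOfFin rfl m = p) (m' : Fin n) (hm'S : m' ∈ S) (hm'1 : q ≤ m')
    (hm'2 : m' < p) : (Mu A q S m).det = 0 := by
  rw [Mu_det A hA p q hqp S m hm]
  apply Finset.prod_eq_zero (Finset.mem_univ m)
  obtain ⟨j, hj⟩ : ∃ j : Fin S.card, S.orderEmbOfFin rfl j = m' := by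
    have : m' ∈ Set.range (S.orderEmbOfFin (rfl : S.card = S.card)) := by
      rw [Finset.range_orderEmbOfFin]; exact_mod_cast hm'S
    exact this
  have hjm : j < m := by
    have := (S.orderEmbOfFin (rfl : S.card = S.card)).strictMono.lt_iff_lt.mp
      (show S.orderEmbOfFin rfl j < S.orderEmbOfFin rfl m from by rw [hj, hm]; exact hm'2)
    exact this
  have hm0 : (m : ℕ) ≠ 0 := by
    rw [Fin.lt_def] at hjm; omega
  rw [dif_neg hm0]
  have h1 : Mu A q S m m m = 1 := by
    simp only [Mu, Matrix.updateRow_self]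
    rw [if_pos (by rw [hm]; exact hqp)]
  have h2 : Mu A q S m m ⟨(m : ℕ) - 1, by omega⟩ = 1 := by
    simp only [Mu, Matrix.updateRow_self]
    rw [if_pos]
    refine le_trans hm'1 ?_
    rw [← hj]
    apply (S.orderEmbOfFin (rfl : S.card = S.card)).monotone
    rw [Fin.le_def]
    simp only []
    rw [Fin.lt_def] at hjm
    omega
  rw [h1, h2, sub_self]

end mu

/-- The special subset `T = {t | t < q} ∪ {t | p ≤ t}`. -/
def Tset {n : ℕ} (p q : Fin n) : Finset (Fin n) :=
  Finset.univ.filter (fun t : Fin n => t.val < q.val ∨ p.val ≤ t.val)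

lemma Tset_spec {n : ℕ} (p q : Fin n) (hq' : q.val ≤ p.val) :
    (Tset p q).card = n - p.val + q.val ∧
    ∀ t : Fin (Tset p q).card,
      ((Tset p q).orderEmbOfFin rfl t).val =
        if (t : ℕ) < q.val then (t : ℕ) else p.val + (t : ℕ) - q.val := by
  have hp' : p.val < n := p.isLt
  have hq2 : q.val < n := q.isLt
  set e : Fin (n - p.val + q.val) → Fin n := fun i =>
    if h : (i : ℕ) < q.val then ⟨i, by omega⟩
    else ⟨p.val + (i : ℕ) - q.val, by have := i.isLt; omega⟩ with he
  have hmono : StrictMono e := by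
    intro i j hij
    rw [Fin.lt_def] at hij ⊢
    simp only [he]
    by_cases hi : (i : ℕ) < q.val <;> by_cases hj : (j : ℕ) < q.val <;>
      simp [hi, hj] <;> omega
  have hmem : ∀ i, e i ∈ Tset p q := by
    intro i
    simp only [Tset, Finset.mem_filter, Finset.mem_univ, true_and, he]
    by_cases hi : (i : ℕ) < q.val
    · rw [dif_pos hi]; left; exact hi
    · rw [dif_neg hi]; right; simp only []; omega
  have himg : Finset.image e Finset.univ = Tset p q := by
    apply Finset.Subset.antisymm
    · intro a ha
      obtain ⟨i, _, rfl⟩ := Finset.mem_image.mp ha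
      exact hmem i
    · intro a ha
      have h := (Finset.mem_filter.mp ha).2
      rcases h with h | h
      · refine Finset.mem_image.mpr ⟨⟨a.val, by omega⟩, Finset.mem_univ _, ?_⟩
        simp only [he]
        rw [dif_pos (by simpa using h)]
      · refine Finset.mem_image.mpr ⟨⟨q.val + a.val - p.val, by have := a.isLt; omega⟩,
          Finset.mem_univ _, ?_⟩
        simp only [he]
        rw [dif_neg (show ¬ q.val + a.val - p.val < q.val by omega)]
        apply Fin.ext
        show p.val + (q.val + a.val - p.val) - q.val = a.val
        omega
  have hcard : (Tset p q).card = n - p.val + q.val := by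
    rw [← himg, Finset.card_image_of_injective _ hmono.injective, Finset.card_univ,
      Fintype.card_fin]
  refine ⟨hcard, ?_⟩
  intro t
  have huniq := Finset.orderEmbOfFin_unique (s := Tset p q) hcard hmem hmono
  have ht' : ((Tset p q).orderEmbOfFin rfl t) =
      (Tset p q).orderEmbOfFin hcard ⟨t.val, by rw [← hcard]; exact t.isLt⟩ := by
    rw [Finset.orderEmbOfFin_eq_orderEmbOfFin_iff]
  rw [ht', ← congrFun huniq ⟨t.val, by rw [← hcard]; exact t.isLt⟩]
  simp only [he]
  by_cases h : (t : ℕ) < q.val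
  · rw [dif_pos h, if_pos h]
  · rw [dif_neg h, if_neg h]

lemma Mu_value {k : Type*} [Field k] {n : ℕ} (A : Matrix (Fin n) (Fin n) k)
    (hA : ∀ i j : Fin n, i < j → A i j = 0) (p q : Fin n) (hqp : q ≤ p)
    (m : Fin (Tset p q).card) (hm : (Tset p q).orderEmbOfFin rfl m = p) :
    (Mu A q (Tset p q) m).det =
      (∏ t ∈ Finset.univ.filter (fun t : Fin n => t < q), A t t) *
      (∏ t ∈ Finset.univ.filter (fun t : Fin n => p < t), A t t) := by
  have hq' : q.val ≤ p.val := hqp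
  have hf := (Tset_spec p q hq').2
  have hmval : (m : ℕ) = q.val := by
    have h1 := hf m
    rw [hm] at h1
    by_cases h : (m : ℕ) < q.val
    · rw [if_pos h] at h1; omega
    · rw [if_neg h] at h1; omega
  rw [Mu_det A hA p q hqp _ m hm]
  have hdiag : ∀ t : Fin (Tset p q).card,
      (Mu A q (Tset p q) m t t -
        if h : (t : ℕ) = 0 then 0 else Mu A q (Tset p q) m t ⟨(t : ℕ) - 1, by omega⟩)
      = (if (Tset p q).orderEmbOfFin rfl t = p then 1
          else A ((Tset p q).orderEmbOfFin rfl t) ((Tset p q).orderEmbOfFin rfl t)) := by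
    intro t
    by_cases htm : t = m
    · subst htm
      rw [if_pos hm]
      have h1 : Mu A q (Tset p q) t t t = 1 := by
        simp only [Mu, Matrix.updateRow_self]
        exact if_pos (by rw [hm]; exact hqp)
      by_cases hq0 : (t : ℕ) = 0
      · rw [dif_pos hq0, h1, sub_zero]
      · rw [dif_neg hq0, h1]
        have h2 : Mu A q (Tset p q) t t ⟨(t : ℕ) - 1, by omega⟩ = 0 := by
          simp only [Mu, Matrix.updateRow_self]
          refine if_neg ?_
          rw [Fin.le_def, hf ⟨(t : ℕ) - 1, by omega⟩]
          simp only [Fin.val_mk]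
          rw [if_pos (by omega)]
          omega
        rw [h2, sub_zero]
    · have hftp : (Tset p q).orderEmbOfFin rfl t ≠ p := by
        intro h
        apply htm
        exact ((Tset p q).orderEmbOfFin (rfl : (Tset p q).card = _)).injective (by rw [h, hm])
      rw [if_neg hftp]
      have hMt : ∀ j : Fin (Tset p q).card, Mu A q (Tset p q) m t j =
          (A * Cmat k n) ((Tset p q).orderEmbOfFin rfl t) ((Tset p q).orderEmbOfFin rfl j) := by
        intro j
        simp only [Mu, Matrix.updateRow_ne htm, Matrix.submatrix_apply]
      have htq : (t : ℕ) ≠ q.val := by rw [← hmval]; exact fun h => htm (Fin.ext h)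
      by_cases hlt : (t : ℕ) < q.val
      · by_cases ht0 : (t : ℕ) = 0
        · rw [dif_pos ht0, hMt, sub_zero,
            AC_const A hA (le_refl ((Tset p q).orderEmbOfFin rfl t))]
          have hft0 : ((Tset p q).orderEmbOfFin rfl t).val = 0 := by
            rw [hf t, if_pos hlt]; exact ht0
          rw [Finset.sum_eq_single ((Tset p q).orderEmbOfFin rfl t)]
          · intro l _ hl
            apply hA
            rw [Fin.lt_def, hft0]
            have : l.val ≠ 0 := by rw [← hft0]; exact fun h => hl (Fin.ext h)
            omega
          · intro h; exact absurd (Finset.mem_univ _) h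
        · rw [dif_neg ht0, hMt, hMt]
          have hstep : (((Tset p q).orderEmbOfFin rfl ⟨(t : ℕ) - 1, by omega⟩ : Fin n) : ℕ) + 1 =
              (((Tset p q).orderEmbOfFin rfl t : Fin n) : ℕ) := by
            rw [hf t, hf ⟨(t : ℕ) - 1, by omega⟩]
            simp only []
            rw [if_pos hlt, if_pos (by omega)]
            omega
          rw [AC_step A hstep]
          ring
      · have hgt : q.val < (t : ℕ) := by omega
        rw [dif_neg (by omega), hMt, hMt]
        have hstep : (((Tset p q).orderEmbOfFin rfl ⟨(t : ℕ) - 1, by omega⟩ : Fin n) : ℕ) + 1 =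
            (((Tset p q).orderEmbOfFin rfl t : Fin n) : ℕ) := by
          rw [hf t, hf ⟨(t : ℕ) - 1, by omega⟩]
          simp only []
          rw [if_neg (by omega), if_neg (by omega)]
          omega
        rw [AC_step A hstep]
        ring
  rw [Finset.prod_congr rfl fun t _ => hdiag t]
  have hinj : Function.Injective fun t : Fin (Tset p q).card =>
      (Tset p q).orderEmbOfFin rfl t :=
    ((Tset p q).orderEmbOfFin (rfl : (Tset p q).card = _)).injective
  have himg : Finset.image (fun t : Fin (Tset p q).card => (Tset p q).orderEmbOfFin rfl t)
      Finset.univ = Tset p q := by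
    ext a
    simp only [Finset.mem_image, Finset.mem_univ, true_and]
    constructor
    · rintro ⟨i, rfl⟩
      exact Finset.orderEmbOfFin_mem _ _ _
    · intro ha
      have : a ∈ Set.range ((Tset p q).orderEmbOfFin (rfl : (Tset p q).card = _)) := by
        rw [Finset.range_orderEmbOfFin]
        exact_mod_cast ha
      exact this
  have hre : ∏ x ∈ Tset p q, (if x = p then 1 else A x x)
      = ∏ t : Fin (Tset p q).card,
        (if (Tset p q).orderEmbOfFin rfl t = p then 1
          else A ((Tset p q).orderEmbOfFin rfl t) ((Tset p q).orderEmbOfFin rfl t)) := by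
    conv_lhs => rw [← himg]
    rw [Finset.prod_image fun a _ b _ h => hinj h]
  rw [← hre]
  have hsplit : Tset p q = (Finset.univ.filter (fun t : Fin n => t < q)) ∪
      (Finset.univ.filter (fun t : Fin n => p ≤ t)) := by
    ext a
    simp only [Tset, Finset.mem_filter, Finset.mem_univ, true_and, Finset.mem_union,
      Fin.lt_def, Fin.le_def]
  have hdisj : Disjoint (Finset.univ.filter (fun t : Fin n => t < q))
      (Finset.univ.filter (fun t : Fin n => p ≤ t)) := by
    rw [Finset.disjoint_left]
    intro a h1 h2
    rw [Finset.mem_filter] at h1 h2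
    have h1' : a.val < q.val := h1.2
    have h2' : p.val ≤ a.val := h2.2
    omega
  rw [hsplit, Finset.prod_union hdisj]
  congr 1
  · refine Finset.prod_congr rfl fun x hx => ?_
    rw [Finset.mem_filter] at hx
    have : x ≠ p := by
      have : x.val < q.val := hx.2
      intro h; subst h; omega
    rw [if_neg this]
  · have hins : Finset.univ.filter (fun t : Fin n => p ≤ t) =
        insert p (Finset.univ.filter (fun t : Fin n => p < t)) := by
      ext a
      simp only [Finset.mem_filter, Finset.mem_univ, true_and, Finset.mem_insert]
      rw [le_iff_lt_or_eq]
      constructor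
      · rintro (h | h)
        · right; exact h
        · left; exact h.symm
      · rintro (h | h)
        · right; exact h.symm
        · left; exact h
    rw [hins, Finset.prod_insert (by simp)]
    rw [if_pos rfl, one_mul]
    refine Finset.prod_congr rfl fun x hx => ?_
    rw [Finset.mem_filter] at hx
    have hne : x ≠ p := fun h => absurd hx.2 (by rw [h]; exact lt_irrefl p)
    rw [if_neg hne]

section main

variable {k : Type*} [Field k] {n : ℕ}

lemma Ax_row_ne (A : Matrix (Fin n) (Fin n) k) (p q : Fin n) (x : k) (i j : Fin n)
    (hi : i ≠ p) :
    ((Matrix.of fun i j : Fin n => if i = p ∧ j = q then x else A i j) * Cmat k n) i j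
      = (A * Cmat k n) i j := by
  rw [Matrix.mul_apply, Matrix.mul_apply]
  refine Finset.sum_congr rfl fun l _ => ?_
  rw [Matrix.of_apply, if_neg (fun h => hi h.1)]

lemma Ax_row_p (A : Matrix (Fin n) (Fin n) k) (p q : Fin n) (x : k) (j : Fin n) :
    ((Matrix.of fun i j : Fin n => if i = p ∧ j = q then x else A i j) * Cmat k n) p j
      = (A * Cmat k n) p j + (x - A p q) * (if q ≤ j then 1 else 0) := by
  rw [Matrix.mul_apply, Matrix.mul_apply]
  have hterm : ∀ l : Fin n,
      (Matrix.of fun i j : Fin n => if i = p ∧ j = q then x else A i j) p l * Cmat k n l j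
      = A p l * Cmat k n l j +
        (if l = q then (x - A p q) * Cmat k n l j else 0) := by
    intro l
    by_cases hl : l = q
    · subst hl
      rw [Matrix.of_apply, if_pos ⟨rfl, rfl⟩, if_pos rfl]
      ring
    · rw [Matrix.of_apply, if_neg (fun h => hl h.2), if_neg hl, add_zero]
  rw [Finset.sum_congr rfl fun l _ => hterm l, Finset.sum_add_distrib,
    Finset.sum_ite_eq' Finset.univ q (fun l => (x - A p q) * Cmat k n l j)]
  simp only [Finset.mem_univ, if_true]
  rfl

lemma det_Ax (A : Matrix (Fin n) (Fin n) k) (p q : Fin n) (x : k) (S : Finset (Fin n))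
    (m : Fin S.card) (hm : S.orderEmbOfFin rfl m = p) :
    (((Matrix.of fun i j : Fin n => if i = p ∧ j = q then x else A i j) * Cmat k n).submatrix
        (fun i : Fin S.card => S.orderEmbOfFin rfl i)
        (fun i : Fin S.card => S.orderEmbOfFin rfl i)).det
      = ((A * Cmat k n).submatrix (fun i : Fin S.card => S.orderEmbOfFin rfl i)
          (fun i : Fin S.card => S.orderEmbOfFin rfl i)).det
        + (x - A p q) * (Mu A q S m).det := by
  have hsub : ((Matrix.of fun i j : Fin n => if i = p ∧ j = q then x else A i j) *
        Cmat k n).submatrix (fun i : Fin S.card => S.orderEmbOfFin rfl i)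
        (fun i : Fin S.card => S.orderEmbOfFin rfl i)
      = Matrix.updateRow ((A * Cmat k n).submatrix
          (fun i : Fin S.card => S.orderEmbOfFin rfl i)
          (fun i : Fin S.card => S.orderEmbOfFin rfl i)) m
          ((fun s => (A * Cmat k n).submatrix (fun i : Fin S.card => S.orderEmbOfFin rfl i)
              (fun i : Fin S.card => S.orderEmbOfFin rfl i) m s)
            + fun s => (x - A p q) * (if q ≤ S.orderEmbOfFin rfl s then 1 else 0)) := by
    ext t s
    by_cases htm : t = m
    · subst htm
      rw [Matrix.updateRow_self, Matrix.submatrix_apply, hm, Ax_row_p]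
      simp only [Pi.add_apply, Matrix.submatrix_apply, hm]
    · rw [Matrix.updateRow_ne htm, Matrix.submatrix_apply, Matrix.submatrix_apply]
      apply Ax_row_ne
      intro h
      exact htm (((S.orderEmbOfFin (rfl : S.card = _)).injective) (by rw [h, hm]))
  rw [hsub, Matrix.det_updateRow_add]
  congr 1
  · rw [show (fun s => (A * Cmat k n).submatrix (fun i : Fin S.card => S.orderEmbOfFin rfl i)
        (fun i : Fin S.card => S.orderEmbOfFin rfl i) m s)
      = (A * Cmat k n).submatrix (fun i : Fin S.card => S.orderEmbOfFin rfl i)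
          (fun i : Fin S.card => S.orderEmbOfFin rfl i) m from rfl,
      Matrix.updateRow_eq_self]
  · rw [show (fun s => (x - A p q) * (if q ≤ S.orderEmbOfFin rfl s then (1:k) else 0))
      = (x - A p q) • (fun s => (if q ≤ S.orderEmbOfFin rfl s then (1:k) else 0)) from by
        funext s; simp [smul_eq_mul],
      Matrix.det_updateRow_smul]
    rfl

end main

theorem stmt2 {k : Type*} [Field k] {n r : ℕ}
    (A : Matrix (Fin n) (Fin n) k)
    (hA : ∀ i j : Fin n, i < j → A i j = 0)
    (p q : Fin n) (hqp : q ≤ p) (hpos : n - (p.val + 1) + (q.val + 1) = r)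
    (x y : k) :
    Pcoeff r (Matrix.of fun i j : Fin n => if i = p ∧ j = q then x else A i j)
      - Pcoeff r (Matrix.of fun i j : Fin n => if i = p ∧ j = q then y else A i j)
      = (x - y) * (∏ t ∈ Finset.univ.filter (fun t : Fin n => t < q), A t t)
          * (∏ t ∈ Finset.univ.filter (fun t : Fin n => p < t), A t t) := by
  have hp' : p.val < n := p.isLt
  have hq' : q.val ≤ p.val := hqp
  have hspec := Tset_spec p q hq'
  have hTcard : (Tset p q).card = r := by rw [hspec.1]; omega
  have hqr : q.val < (Tset p q).card := by rw [hspec.1]; omega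
  have hm : (Tset p q).orderEmbOfFin rfl (⟨q.val, hqr⟩ : Fin (Tset p q).card) = p := by
    apply Fin.ext
    rw [hspec.2 ⟨q.val, hqr⟩]
    simp only [Fin.val_mk]
    rw [if_neg (lt_irrefl q.val)]
    omega
  have hTmem : Tset p q ∈ (Finset.univ : Finset (Fin n)).powersetCard r :=
    Finset.mem_powersetCard.mpr ⟨Finset.subset_univ _, hTcard⟩
  unfold Pcoeff
  rw [← Finset.sum_sub_distrib]
  rw [Finset.sum_eq_single_of_mem (Tset p q) hTmem ?h0]
  · rw [det_Ax A p q x _ ⟨q.val, hqr⟩ hm, det_Ax A p q y _ ⟨q.val, hqr⟩ hm,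
      Mu_value A hA p q hqp ⟨q.val, hqr⟩ hm]
    ring
  case h0 =>
    intro S hS hST
    by_cases hp : p ∈ S
    · obtain ⟨mS, hmS⟩ : ∃ mS : Fin S.card, S.orderEmbOfFin rfl mS = p := by
        have : p ∈ Set.range (S.orderEmbOfFin (rfl : S.card = _)) := by
          rw [Finset.range_orderEmbOfFin]
          exact_mod_cast hp
        exact this
      rw [det_Ax A p q x _ mS hmS, det_Ax A p q y _ mS hmS]
      obtain ⟨m', hm'S, hm'1, hm'2⟩ : ∃ m' ∈ S, q ≤ m' ∧ m' < p := by
        by_contra hc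
        push_neg at hc
        apply hST
        apply Finset.eq_of_subset_of_card_le
        · intro a ha
          simp only [Tset, Finset.mem_filter, Finset.mem_univ, true_and]
          by_cases h : a.val < q.val
          · left; exact h
          · right
            have hqa : q ≤ a := by rw [Fin.le_def]; omega
            have := hc a ha hqa
            rw [Fin.le_def] at this
            exact this
        · rw [hTcard, (Finset.mem_powersetCard.mp hS).2]
      rw [Mu_vanish A hA p q hqp S mS hmS m' hm'S hm'1 hm'2]
      ring
    · have heq : ∀ z : k,
          ((Matrix.of fun i j : Fin n => if i = p ∧ j = q then z else A i j) *
              Cmat k n).submatrix (fun i : Fin S.card => S.orderEmbOfFin rfl i)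
            (fun i : Fin S.card => S.orderEmbOfFin rfl i)
          = (A * Cmat k n).submatrix (fun i : Fin S.card => S.orderEmbOfFin rfl i)
            (fun i : Fin S.card => S.orderEmbOfFin rfl i) := by
        intro z
        ext t s
        rw [Matrix.submatrix_apply, Matrix.submatrix_apply, Ax_row_ne]
        intro h
        apply hp
        rw [← h]
        exact Finset.orderEmbOfFin_mem _ _ _
      rw [heq x, heq y, sub_self]
end

section
/- Let D be a free abelian group of finite rank (a lattice), and let A, B, C ⊆ D be subgroups such that: A is saturated in D (i.e., the quotient D/A is torsion-free), A ∩ B = {0}, C ∩ B = {0}, and A + B has finite index in D (i.e., D/(A+B) is finite). Then there exists a subgroup B' of D such that C ∩ B' = {0} and D is the internal direct sum A ⊕ B' (that is, A ∩ B' = {0} and A + B' = D). -/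
/-!
Since `A` is saturated, `D ⧸ A` is free; lift a basis `qᵢ` to `xᵢ ∈ D`. Some `n ≠ 0` kills
`D ⧸ (A ⊔ B)`, so `n • xᵢ = aᵢ + bᵢ` with `aᵢ ∈ A`, `bᵢ ∈ B`. For every integer `k` the vectors
`xᵢ + k • aᵢ` still lift the `qᵢ`, hence span a complement of `A`. It remains to choose `k` so
that this complement meets `C` trivially, which holds as soon as the images of the `xᵢ + k • aᵢ`
in `ℚ ⊗ (D ⧸ C)` are linearly independent. At the rational parameter `-1/n` in place of `k` these
images are those of `bᵢ / n`, which are independent because `C ∩ B = 0`; and a pencil `u + t • w`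
of families in a vector space that is independent for one `t` is independent for all but finitely
many `t`.
-/

open Function Set Submodule Module
open scoped TensorProduct

theorem LinearMap.finite_setOf_not_injective_add_smul {K V W : Type*} [Field K]
    [AddCommGroup V] [Module K V] [FiniteDimensional K V] [AddCommGroup W] [Module K W]
    {f g : V →ₗ[K] W} {t₀ : K} (h : Injective (f + t₀ • g)) :
    {t : K | ¬Injective (f + t • g)}.Finite := by
  -- With `L` a left inverse of `f + t₀ • g`, a kernel vector of `f + t • g` (`t ≠ t₀`) is an
  -- eigenvector of `L ∘ g` with eigenvalue `-(t - t₀)⁻¹`.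
  obtain ⟨L, hL⟩ := (f + t₀ • g).exists_leftInverse_of_injective (LinearMap.ker_eq_bot.2 h)
  refine (((Module.End.finite_hasEigenvalue (L ∘ₗ g)).image fun μ => t₀ - μ⁻¹).insert t₀).subset ?_
  intro t ht
  obtain ⟨v, hv, hv0⟩ : ∃ v, (f + t • g) v = 0 ∧ v ≠ 0 := by
    simpa [injective_iff_map_eq_zero] using ht
  by_cases htt : t = t₀
  · exact Or.inl htt
  have hLv : v + (t - t₀) • L (g v) = 0 := by
    have := congrArg L hv
    have h2 := LinearMap.congr_fun hL v
    simp only [LinearMap.add_apply, LinearMap.smul_apply, map_add, map_smul, map_zero,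
      LinearMap.comp_apply, LinearMap.id_apply] at this h2
    linear_combination (norm := module) this - h2
  refine Or.inr ⟨-(t - t₀)⁻¹, ?_, by simp⟩
  refine Module.End.hasEigenvalue_of_hasEigenvector ⟨?_, hv0⟩
  rw [Module.End.mem_eigenspace_iff, LinearMap.comp_apply]
  have hne : t - t₀ ≠ 0 := sub_ne_zero.2 htt
  rw [neg_smul, eq_neg_iff_add_eq_zero, ← smul_right_inj hne, smul_add, smul_inv_smul₀ hne,
    smul_zero, add_comm, hLv]

section Pencil

variable {K V ι : Type*} [Field K] [AddCommGroup V] [Module K V] [Fintype ι] {u w : ι → V}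

theorem finite_setOf_not_linearIndependent_add_smul {t₀ : K}
    (h : LinearIndependent K (u + t₀ • w)) :
    {t : K | ¬LinearIndependent K (u + t • w)}.Finite := by
  have hcomb (t : K) : Fintype.linearCombination K (u + t • w) =
      Fintype.linearCombination K u + t • Fintype.linearCombination K w := by
    ext c
    simp [Fintype.linearCombination_apply, Finset.sum_add_distrib, Finset.smul_sum, smul_comm t]
  simp_rw [linearIndependent_iff_injective_fintypeLinearCombination, hcomb] at h ⊢
  exact LinearMap.finite_setOf_not_injective_add_smul h

theorem exists_int_linearIndependent_add_smul [CharZero K] {t₀ : K}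
    (h : LinearIndependent K (u + t₀ • w)) :
    ∃ k : ℤ, LinearIndependent K (u + (k : K) • w) := by
  obtain ⟨k, hk⟩ := ((finite_setOf_not_linearIndependent_add_smul h).preimage
    Int.cast_injective.injOn).infinite_compl.nonempty
  exact ⟨k, not_not.1 hk⟩

end Pencil

namespace Submodule

section Ring

variable {R M ι : Type*} [Ring R] [AddCommGroup M] [Module R M]

theorem isTorsionFree_quotient [Nontrivial R] {A : Submodule R M}
    (hA : ∀ (r : R) (x : M), r ≠ 0 → r • x ∈ A → x ∈ A) : IsTorsionFree R (M ⧸ A) := by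
  refine .of_smul_eq_zero fun r q hrq => or_iff_not_imp_left.2 fun hr => ?_
  induction q using Submodule.Quotient.induction_on with | H x => ?_
  rw [← Quotient.mk_smul, Quotient.mk_eq_zero] at hrq
  rw [Quotient.mk_eq_zero]
  exact hA r x hr hrq

theorem isCompl_span_range_of_mkQ_eq_basis [Fintype ι] (A : Submodule R M)
    (q : Basis ι R (M ⧸ A)) {y : ι → M} (hy : ∀ i, A.mkQ (y i) = q i) :
    IsCompl A (span R (range y)) := by
  have hmkQ (c : ι → R) : A.mkQ (∑ i, c i • y i) = ∑ i, c i • q i := by simp [hy]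
  constructor
  · rw [disjoint_def]
    intro z hzA hzy
    obtain ⟨c, rfl⟩ := mem_span_range_iff_exists_fun R |>.1 hzy
    have hc := Fintype.linearIndependent_iff.1 q.linearIndependent c
      (by rw [← hmkQ, mkQ_apply, Quotient.mk_eq_zero]; exact hzA)
    simp [hc]
  · rw [codisjoint_iff, eq_top_iff]
    intro z _
    set c := q.equivFun (A.mkQ z)
    have hzc : z - ∑ i, c i • y i ∈ A := by
      rw [← Quotient.mk_eq_zero, ← mkQ_apply, map_sub, hmkQ, q.sum_equivFun, sub_self]
    have hspan : ∑ i, c i • y i ∈ span R (range y) :=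
      sum_mem fun i _ => smul_mem _ (c i) (subset_span (mem_range_self i))
    simpa using add_mem_sup hzc hspan

end Ring

theorem linearIndependent_of_mkQ_eq_smul_basis {R M ι : Type*} [CommRing R] [IsDomain R]
    [AddCommGroup M] [Module R M] {A : Submodule R M} [IsTorsionFree R (M ⧸ A)]
    (q : Basis ι R (M ⧸ A)) {n : R} (hn : n ≠ 0) {b : ι → M}
    (hb : ∀ i, A.mkQ (b i) = n • q i) : LinearIndependent R b := by
  refine .of_comp A.mkQ ?_
  rw [show A.mkQ ∘ b = (n • LinearMap.id : M ⧸ A →ₗ[R] M ⧸ A) ∘ q from funext hb]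
  exact q.linearIndependent.map' _ (LinearMap.ker_eq_bot.2 (smul_right_injective _ hn))

theorem exists_zsmul_mem_of_finite_quotient {M : Type*} [AddCommGroup M]
    (N : Submodule ℤ M) [Finite (M ⧸ N)] : ∃ n : ℤ, n ≠ 0 ∧ ∀ x, n • x ∈ N := by
  refine ⟨Nat.card (M ⧸ N), by simp [Nat.card_pos.ne'], fun x => ?_⟩
  rw [natCast_zsmul, ← Quotient.mk_eq_zero, Quotient.mk_smul]
  exact card_nsmul_eq_zero'

section BaseChange

variable {R : Type*} (K : Type*) {M ι : Type*} [CommRing R] [IsDomain R] [Field K] [Algebra R K]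
  [IsFractionRing R K] [AddCommGroup M] [Module R M] (C : Submodule R M)

noncomputable def mkQBaseChange : M →ₗ[R] K ⊗[R] (M ⧸ C) :=
  TensorProduct.mk R K (M ⧸ C) 1 ∘ₗ C.mkQ

variable {K C}

theorem mkQBaseChange_eq_zero_iff {x : M} :
    C.mkQBaseChange K x = 0 ↔ ∃ r ∈ nonZeroDivisors R, r • x ∈ C := by
  rw [mkQBaseChange, LinearMap.comp_apply,
    IsLocalizedModule.eq_zero_iff (nonZeroDivisors R) (TensorProduct.mk R K (M ⧸ C) 1)]
  simp [← Quotient.mk_smul, Submonoid.smul_def]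

theorem linearIndependent_mkQBaseChange [IsTorsionFree R M] {b : ι → M}
    (hb : LinearIndependent R b) (hC : Disjoint C (span R (range b))) :
    LinearIndependent K (C.mkQBaseChange K ∘ b) := by
  rw [← LinearIndependent.iff_fractionRing R K]
  refine hb.map (disjoint_def.2 fun z hz hker => ?_)
  obtain ⟨r, hr, hrz⟩ := mkQBaseChange_eq_zero_iff.1 hker
  have : r • z = 0 := disjoint_def.1 hC _ hrz (smul_mem _ r hz)
  exact (smul_eq_zero.1 this).resolve_left (nonZeroDivisors.ne_zero hr)

theorem disjoint_span_of_linearIndependent_mkQBaseChange {y : ι → M}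
    (hy : LinearIndependent K (C.mkQBaseChange K ∘ y)) : Disjoint C (span R (range y)) :=
  (range_ker_disjoint (hy.restrict_scalars' R)).symm.mono_left fun x hx => by
    simp [mkQBaseChange, (Quotient.mk_eq_zero C).2 hx]

end BaseChange

end Submodule

theorem stmt5_general {D : Type*} [AddCommGroup D] [Module.Free ℤ D] [Module.Finite ℤ D]
    (A B C : Submodule ℤ D)
    (hsat : ∀ (m : ℤ) (x : D), m ≠ 0 → m • x ∈ A → x ∈ A)
    (hCB : C ⊓ B = ⊥)
    (hfin : Finite (D ⧸ (A ⊔ B))) :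
    ∃ B' : Submodule ℤ D, C ⊓ B' = ⊥ ∧ A ⊓ B' = ⊥ ∧ A ⊔ B' = ⊤ := by
  have := A.isTorsionFree_quotient hsat
  let q := Module.Free.chooseBasis ℤ (D ⧸ A)
  choose x hx using fun i => Submodule.Quotient.mk_surjective A (q i)
  obtain ⟨n, hn, hnAB⟩ := (A ⊔ B).exists_zsmul_mem_of_finite_quotient
  choose a ha b hb hab using fun i => mem_sup.1 (hnAB (x i))
  have hAa (i) : (Submodule.Quotient.mk (a i) : D ⧸ A) = 0 := (Quotient.mk_eq_zero A).2 (ha i)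
  have hb_indep : LinearIndependent ℤ b := linearIndependent_of_mkQ_eq_smul_basis q hn fun i => by
    simp [eq_sub_of_add_eq' (hab i), ← hx, hAa]
  let π := C.mkQBaseChange ℚ
  have hπb : LinearIndependent ℚ (π ∘ b) := linearIndependent_mkQBaseChange hb_indep
    ((disjoint_iff.2 hCB).mono_right (span_le.2 (range_subset_iff.2 hb)))
  have hn' : (n : ℚ) ≠ 0 := Int.cast_ne_zero.2 hn
  have hπb' : LinearIndependent ℚ (π ∘ x + (-(n : ℚ)⁻¹) • π ∘ a) := by
    convert hπb.units_smul fun _ => Units.mk0 (n : ℚ)⁻¹ (inv_ne_zero hn') using 1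
    ext i
    simp [eq_sub_of_add_eq' (hab i), ← Int.cast_smul_eq_zsmul ℚ, smul_smul, hn',
      sub_eq_add_neg]
  obtain ⟨k, hk⟩ := exists_int_linearIndependent_add_smul hπb'
  have hy (i) : A.mkQ (x i + k • a i) = q i := by simp [← hx, hAa]
  have hcompl := A.isCompl_span_range_of_mkQ_eq_basis q hy
  refine ⟨span ℤ (range fun i => x i + k • a i), disjoint_iff.1 ?_, hcompl.inf_eq_bot,
    hcompl.sup_eq_top⟩
  have hπy : π ∘ (fun i => x i + k • a i) = π ∘ x + (k : ℚ) • π ∘ a := by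
    ext i
    simp [Int.cast_smul_eq_zsmul]
  exact disjoint_span_of_linearIndependent_mkQBaseChange (hπy ▸ hk)

theorem stmt5 {D : Type*} [AddCommGroup D] [Module.Free ℤ D] [Module.Finite ℤ D]
    (A B C : Submodule ℤ D)
    (hsat : ∀ (m : ℤ) (x : D), m ≠ 0 → m • x ∈ A → x ∈ A)
    (hAB : A ⊓ B = ⊥) (hCB : C ⊓ B = ⊥)
    (hfin : Finite (D ⧸ (A ⊔ B))) :
    ∃ B' : Submodule ℤ D, C ⊓ B' = ⊥ ∧ A ⊓ B' = ⊥ ∧ A ⊔ B' = ⊤ :=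
  stmt5_general A B C hsat hCB hfin
end

section
/- Let Φ be a reduced crystallographic root system with a fixed base (set of simple roots) Δ = {α_1, …, α_n}, enumerated in some order, and for a simple root α let s_α denote the corresponding simple reflection. Define β_i = s_{α_n} s_{α_{n-1}} ⋯ s_{α_{i+1}}(α_i) for i = 1, …, n (so β_n = α_n). Then for all i, j ∈ {1, …, n} (including i = j), the sum β_i + β_j is not a root of Φ. -/
/-!
STATEMENT 6: Let `Φ` be a reduced crystallographic root system with a base (set of simple
roots) `Δ = {α_1, …, α_n}` enumerated in some order, and for each `i` put
`β_i = s_{α_n} s_{α_{n-1}} ⋯ s_{α_{i+1}} (α_i)`.  Then for all `i, j` (including `i = j`)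
the sum `β_i + β_j` is not a root.

The root system is encoded by the structure `ReducedCrystRootSystem` below; a base
(enumerated as `b 0, …, b (n-1)`, i.e. `0`-indexed) is encoded by `IsBase`, and `β_i`
(with `i` `0`-indexed) by `beta`.
-/

/-- A reduced crystallographic root system in a vector space `V` over `ℚ`. -/
structure ReducedCrystRootSystem (V : Type*) [AddCommGroup V] [Module ℚ V] where
  /-- The set of roots. -/
  roots : Set V
  /-- For a root `α`, the linear functional `⟨·, α̌⟩` given by pairing with the coroot. -/
  coroot : V → V →ₗ[ℚ] ℚ
  finite : roots.Finite
  zero_not_mem : (0 : V) ∉ roots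
  span_eq_top : Submodule.span ℚ roots = ⊤
  coroot_self : ∀ α ∈ roots, coroot α α = 2
  crystallographic : ∀ α ∈ roots, ∀ β ∈ roots, ∃ m : ℤ, coroot α β = (m : ℚ)
  reflect_mem : ∀ α ∈ roots, ∀ β ∈ roots, β - coroot α β • α ∈ roots
  reduced : ∀ α ∈ roots, ∀ t : ℚ, t • α ∈ roots → t = 1 ∨ t = -1

namespace ReducedCrystRootSystem

variable {V : Type*} [AddCommGroup V] [Module ℚ V]

/-- The reflection `s_α` in the root `α`. -/
def refl (R : ReducedCrystRootSystem V) (α x : V) : V := x - R.coroot α x • α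

/-- `b 0, …, b (n-1)` is an enumerated base (system of simple roots) of `R`:
its members are roots, pairwise distinct, linearly independent, and every root is a
linear combination of them with integer coefficients which are all `≥ 0` or all `≤ 0`. -/
structure IsBase (R : ReducedCrystRootSystem V) (n : ℕ) (b : ℕ → V) : Prop where
  mem : ∀ i < n, b i ∈ R.roots
  inj : ∀ i < n, ∀ j < n, b i = b j → i = j
  indep : LinearIndependent ℚ (fun i : Fin n => b i)
  coords : ∀ β ∈ R.roots, ∃ c : ℕ → ℤ,
    ((∀ i, 0 ≤ c i) ∨ (∀ i, c i ≤ 0)) ∧ β = ∑ i ∈ Finset.range n, (c i : ℚ) • b i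

/-- `beta R b n i = s_{b (n-1)} ⋯ s_{b (i+2)} s_{b (i+1)} (b i)` (`0`-indexed version of
`β_i = s_{α_n} ⋯ s_{α_{i+1}} (α_i)`): the reflections are applied starting from the one
of smallest index. -/
def beta (R : ReducedCrystRootSystem V) (b : ℕ → V) (n i : ℕ) : V :=
  (List.range' (i + 1) (n - (i + 1))).foldl (fun x j => R.refl (b j) x) (b i)

end ReducedCrystRootSystem

namespace ReducedCrystRootSystem

variable {V : Type*} [AddCommGroup V] [Module ℚ V] (R : ReducedCrystRootSystem V)

lemma my_refl_add (α x y : V) : R.refl α (x + y) = R.refl α x + R.refl α y := by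
  simp only [refl, map_add, add_smul]; abel

lemma my_refl_mem (α : V) (hα : α ∈ R.roots) {x : V} (hx : x ∈ R.roots) :
    R.refl α x ∈ R.roots := R.reflect_mem α hα x hx

lemma my_refl_refl (α : V) (hα : α ∈ R.roots) (x : V) :
    R.refl α (R.refl α x) = x := by
  simp only [refl, map_sub, map_smul, R.coroot_self α hα, smul_eq_mul, sub_smul, mul_smul]
  module

lemma my_refl_self (α : V) (hα : α ∈ R.roots) : R.refl α α = -α := by
  simp only [refl, R.coroot_self α hα, two_smul]; abel

lemma my_beta_succ (b : ℕ → V) (m i : ℕ) (h : i < m) :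
    R.beta b (m + 1) i = R.refl (b m) (R.beta b m i) := by
  have h1 : m + 1 - (i + 1) = (m - (i + 1)) + 1 := by omega
  have h2 : (i + 1) + 1 * (m - (i + 1)) = m := by omega
  rw [beta, h1, List.range'_concat, h2, List.foldl_append, beta]
  rfl

lemma my_beta_self (b : ℕ → V) (m : ℕ) : R.beta b (m + 1) m = b m := by
  simp [beta]

lemma my_beta_mem (b : ℕ → V) {n : ℕ} (hb : R.IsBase n b) {m i : ℕ} (him : i < m)
    (hmn : m ≤ n) : R.beta b m i ∈ R.roots := by
  induction m, him using Nat.le_induction with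
  | base => rw [my_beta_self]; exact hb.mem i (by omega)
  | succ m him ih =>
    rw [my_beta_succ R b m i him]
    exact R.my_refl_mem (b m) (hb.mem m (by omega)) (ih (by omega))

lemma my_coords_unique {n : ℕ} {b : ℕ → V} (hb : R.IsBase n b) (f g : ℕ → ℚ)
    (h : ∑ k ∈ Finset.range n, f k • b k = ∑ k ∈ Finset.range n, g k • b k) :
    ∀ k < n, f k = g k := by
  intro k hk
  have hs : ∑ k ∈ Finset.range n, (f k - g k) • b k = 0 := by
    simp only [sub_smul, Finset.sum_sub_distrib, h, sub_self]
  rw [Finset.sum_range (fun k => (f k - g k) • b k)] at hs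
  have := Fintype.linearIndependent_iff.mp hb.indep (fun j : Fin n => f j - g j) hs ⟨k, hk⟩
  simpa [sub_eq_zero] using this

lemma my_beta_repr (b : ℕ → V) {n : ℕ} (hb : R.IsBase n b) {m i : ℕ} (him : i < m)
    (hmn : m ≤ n) : ∃ d : ℕ → ℚ, d i = 1 ∧ (∀ k, k ≠ i → ¬(i < k ∧ k < m) → d k = 0) ∧
      R.beta b m i = ∑ k ∈ Finset.range n, d k • b k := by
  induction m, him using Nat.le_induction with
  | base =>
    refine ⟨fun k => if k = i then 1 else 0, by simp, fun k h1 _ => by simp [h1], ?_⟩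
    rw [my_beta_self]
    have : ∀ k, ((if k = i then (1:ℚ) else 0) • b k) = (if k = i then b k else 0) := by
      intro k; split <;> simp
    rw [Finset.sum_congr rfl fun k _ => this k, Finset.sum_ite_eq' (Finset.range n) i b]
    simp [Nat.lt_of_lt_of_le (Nat.lt_succ_self i) hmn]
  | succ m him ih =>
    obtain ⟨d, hdi, hd0, hdsum⟩ := ih (by omega)
    have hdm : d m = 0 := hd0 m (by omega) (by omega)
    set c : ℚ := R.coroot (b m) (R.beta b m i) with hc
    refine ⟨fun k => if k = m then -c else d k, ?_, ?_, ?_⟩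
    · show (if i = m then -c else d i) = 1
      rw [if_neg (by omega)]; exact hdi
    · intro k h1 h2
      show (if k = m then -c else d k) = 0
      have hk : k ≠ m := by omega
      rw [if_neg hk]; exact hd0 k h1 (by omega)
    · rw [my_beta_succ R b m i him, refl, ← hc, hdsum]
      have key : ∑ k ∈ Finset.range n, (if k = m then -c else d k) • b k
          = (∑ k ∈ Finset.range n, d k • b k) + (-c) • b m := by
        have hmem : m ∈ Finset.range n := Finset.mem_range.mpr (by omega)
        rw [← Finset.sum_erase_add _ _ hmem, ← Finset.sum_erase_add _ (fun k => d k • b k) hmem]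
        rw [if_pos rfl, hdm, zero_smul, add_zero]
        congr 1
        exact Finset.sum_congr rfl fun k hk => by
          rw [if_neg (Finset.ne_of_mem_erase hk)]
      rw [key, neg_smul]; abel

lemma my_mixed_not_root (b : ℕ → V) {n : ℕ} (hb : R.IsBase n b) {m i : ℕ} (him : i < m)
    (hmn : m < n) : R.beta b m i - b m ∉ R.roots := by
  intro hroot
  obtain ⟨d, hdi, hd0, hdsum⟩ := R.my_beta_repr b hb him (le_of_lt hmn)
  have hdm : d m = 0 := hd0 m (by omega) (by omega)
  have hrepr : R.beta b m i - b m
      = ∑ k ∈ Finset.range n, (if k = m then (-1 : ℚ) else d k) • b k := by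
    have hmem' : m ∈ Finset.range n := Finset.mem_range.mpr hmn
    have key : ∑ k ∈ Finset.range n, (if k = m then (-1 : ℚ) else d k) • b k
        = (∑ k ∈ Finset.range n, d k • b k) + (-1 : ℚ) • b m := by
      rw [← Finset.sum_erase_add _ _ hmem', ← Finset.sum_erase_add _ (fun k => d k • b k) hmem']
      rw [if_pos rfl, hdm, zero_smul, add_zero]
      congr 1
      exact Finset.sum_congr rfl fun k hk => by
        rw [if_neg (Finset.ne_of_mem_erase hk)]
    rw [key, hdsum, neg_smul, one_smul]; abel
  obtain ⟨c, hsign, hcsum⟩ := hb.coords _ hroot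
  have huniq : ∀ k < n, ((c k : ℚ)) = (if k = m then (-1 : ℚ) else d k) := by
    apply R.my_coords_unique hb
    rw [← hcsum, ← hrepr]
  have hci : (c i : ℚ) = 1 := by
    have := huniq i (by omega); rwa [if_neg (by omega), hdi] at this
  have hcm : (c m : ℚ) = -1 := by
    have := huniq m hmn; rwa [if_pos rfl] at this
  have hci' : c i = 1 := by exact_mod_cast hci
  have hcm' : c m = -1 := by exact_mod_cast hcm
  rcases hsign with h | h
  · have := h m; omega
  · have := h i; omega

theorem my_main (b : ℕ → V) {n : ℕ} (hb : R.IsBase n b) :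
    ∀ m ≤ n, ∀ i < m, ∀ j < m, R.beta b m i + R.beta b m j ∉ R.roots := by
  intro m
  induction m with
  | zero => intro _ i hi; omega
  | succ m ih =>
    intro hmn i hi j hj hmem
    have hbm : b m ∈ R.roots := hb.mem m (by omega)
    -- case where one index equals m and the other is smaller
    have mixed : ∀ i < m, R.beta b (m+1) i + R.beta b (m+1) m ∉ R.roots := by
      intro i him hroot
      have h1 : R.refl (b m) (R.beta b (m+1) i + R.beta b (m+1) m) ∈ R.roots :=
        R.my_refl_mem (b m) hbm hroot
      rw [my_refl_add, my_beta_self, my_refl_self R (b m) hbm,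
        my_beta_succ R b m i him, my_refl_refl R (b m) hbm] at h1
      exact R.my_mixed_not_root b hb him (by omega) (by rw [sub_eq_add_neg]; exact h1)
    by_cases hiM : i = m
    · by_cases hjM : j = m
      · -- both equal m : 2 • b m is a root, contradiction with reduced
        rw [hiM, hjM, my_beta_self] at hmem
        have h2 : (2 : ℚ) • b m ∈ R.roots := by rwa [two_smul]
        rcases R.reduced (b m) hbm 2 h2 with h | h <;> norm_num at h
      · -- i = m, j < m
        rw [hiM] at hmem
        exact mixed j (by omega) (by rwa [add_comm] at hmem)
    · by_cases hjM : j = m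
      · rw [hjM] at hmem
        exact mixed i (by omega) hmem
      · -- both < m : reflect back and use ih
        have hi' : i < m := by omega
        have hj' : j < m := by omega
        have h1 : R.refl (b m) (R.beta b (m+1) i + R.beta b (m+1) j) ∈ R.roots :=
          R.my_refl_mem (b m) hbm hmem
        rw [my_refl_add, my_beta_succ R b m i hi', my_beta_succ R b m j hj',
          my_refl_refl R (b m) hbm, my_refl_refl R (b m) hbm] at h1
        exact ih (by omega) i hi' j hj' h1

end ReducedCrystRootSystem

theorem stmt6 {V : Type*} [AddCommGroup V] [Module ℚ V]
    (R : ReducedCrystRootSystem V) (n : ℕ) (b : ℕ → V) (hb : R.IsBase n b) :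
    ∀ i < n, ∀ j < n, R.beta b n i + R.beta b n j ∉ R.roots := by
  exact R.my_main b hb n le_rfl
end

section
/- Let Φ be a reduced crystallographic root system with base Δ of cardinality n, and let J ⊆ Δ be a subset of cardinality m such that no connected component of the Dynkin graph of Δ is entirely contained in J (here the Dynkin graph has vertex set Δ with an edge between distinct simple roots α, β iff the pairing ⟨α, β̌⟩ is nonzero). Then there exists an enumeration α_1, …, α_n of Δ such that: (1) J = {α_1, …, α_m}, and (2) for every i = 1, …, n, the root β_i = s_{α_n} s_{α_{n-1}} ⋯ s_{α_{i+1}}(α_i) does not belong to Φ_J, the set of roots of Φ lying in the linear span of J. -/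
namespace ReducedCrystRootSystem

variable {V : Type*} [AddCommGroup V] [Module ℚ V]

/-- The adjacency relation of the Dynkin graph of the base `Δ`:
`x` and `y` are distinct elements of `Δ` with `⟨x, y̌⟩ ≠ 0`. -/
def DynkinAdj (R : ReducedCrystRootSystem V) (Δ : Finset V) (x y : V) : Prop :=
  x ∈ Δ ∧ y ∈ Δ ∧ x ≠ y ∧ R.coroot y x ≠ 0

end ReducedCrystRootSystem

/-!
Order `Δ` so that `J` comes first, sorted by decreasing Dynkin-graph distance to `Δ \ J`;
then every `α_j ∈ J` has a neighbour `α_k` with `k > j`. Fix `i`. Applying `s_{α_{i+1}}`,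
`s_{α_{i+2}}`, … to `α_i` only ever changes the coefficient of the simple root being reflected
in, so the coefficient of `α_k` is settled at step `k` and keeps its value in `β_i`. All these
roots are positive (their `α_i`-coefficient is `1`), so when `α_k` is a neighbour of some `α_j`,
`j < k`, with a positive coefficient, the root `W` reflected at step `k` has
`⟨W, α̌_k⟩ < 0`, and the new coefficient of `α_k`, namely `-⟨W, α̌_k⟩`, is positive. Following
neighbours from `α_i` we reach some `α_k ∉ J` with a positive coefficient in `β_i`, so
`β_i ∉ span J`.
-/

section Rank

variable {α : Type*}

def ReachesIn (r : α → α → Prop) (T : α → Prop) : ℕ → α → Prop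
  | 0, a => T a
  | k + 1, a => ∃ c, r a c ∧ ReachesIn r T k c

theorem exists_reachesIn_of_reflTransGen {r : α → α → Prop} {T : α → Prop} {a b : α}
    (hb : T b) (h : Relation.ReflTransGen r a b) : ∃ k, ReachesIn r T k a := by
  induction h using Relation.ReflTransGen.head_induction_on with
  | refl => exact ⟨0, hb⟩
  | head hac _ ih =>
    obtain ⟨k, hk⟩ := ih
    exact ⟨k + 1, _, hac, hk⟩

theorem exists_rank_descent (r : α → α → Prop) (T : α → Prop) :
    ∃ d : α → ℕ, ∀ a b, T b → Relation.ReflTransGen r a b → ¬T a →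
      ∃ c, r a c ∧ d c < d a := by
  refine ⟨fun a => sInf {k | ReachesIn r T k a}, fun a b hb hab haT => ?_⟩
  have hmin : ReachesIn r T (sInf {k | ReachesIn r T k a}) a :=
    Nat.sInf_mem (exists_reachesIn_of_reflTransGen hb hab)
  obtain ⟨k, hk⟩ : ∃ k, sInf {k | ReachesIn r T k a} = k + 1 :=
    Nat.exists_eq_add_one_of_ne_zero fun h0 => haT (by rwa [h0] at hmin)
  rw [hk] at hmin
  obtain ⟨c, hac, hc⟩ := hmin
  exact ⟨c, hac, (Nat.sInf_le hc).trans_lt (by beta_reduce; rw [hk]; exact Nat.lt_add_one k)⟩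

end Rank

section Enumeration

variable {α : Type*}

theorem List.getElem_append_mem_iff {L₁ L₂ : List α} {p : α → Prop} (h₁ : ∀ x ∈ L₁, p x)
    (h₂ : ∀ x ∈ L₂, ¬p x) {i : ℕ} (hi : i < (L₁ ++ L₂).length) :
    p (L₁ ++ L₂)[i] ↔ i < L₁.length := by
  rw [List.getElem_append]
  split_ifs with hi₁
  · exact iff_of_true (h₁ _ (List.getElem_mem _)) hi₁
  · exact iff_of_false (h₂ _ (List.getElem_mem _)) hi₁

theorem Finset.exists_list_prefix_sorted [DecidableEq α] {Δ J : Finset α} (hJΔ : J ⊆ Δ)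
    (d : α → ℕ) :
    ∃ L : List α, L.Nodup ∧ L.length = Δ.card ∧ (∀ x, x ∈ L ↔ x ∈ Δ) ∧
      (∀ i (hi : i < L.length), L[i] ∈ J ↔ i < J.card) ∧
      L.Pairwise (fun x y => y ∈ J → d y ≤ d x) := by
  set LJ := J.toList.mergeSort (fun x y => d y ≤ d x)
  have hLJ_perm : LJ.Perm J.toList := List.mergeSort_perm _ _
  have hLJ_mem : ∀ x, x ∈ LJ ↔ x ∈ J := fun x => by rw [hLJ_perm.mem_iff, Finset.mem_toList]
  have hLK_mem : ∀ x, x ∈ (Δ \ J).toList ↔ x ∈ Δ ∧ x ∉ J := fun x => by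
    rw [Finset.mem_toList, Finset.mem_sdiff]
  have hLJ_sorted : LJ.Pairwise (fun x y => d y ≤ d x) := by
    simpa using List.pairwise_mergeSort (le := fun x y => decide (d y ≤ d x))
      (fun _ _ _ => by simp only [decide_eq_true_eq]; omega)
      (fun _ _ => by simp only [Bool.or_eq_true, decide_eq_true_eq]; omega) J.toList
  have hLJ_len : LJ.length = J.card := by rw [hLJ_perm.length_eq, Finset.length_toList]
  refine ⟨LJ ++ (Δ \ J).toList, ?_, ?_, fun x => ?_, fun i hi => ?_, ?_⟩
  · refine List.nodup_append.mpr ⟨hLJ_perm.nodup_iff.mpr J.nodup_toList,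
      (Δ \ J).nodup_toList, ?_⟩
    rintro x hx _ hy rfl
    exact ((hLK_mem x).mp hy).2 ((hLJ_mem x).mp hx)
  · rw [List.length_append, hLJ_len, Finset.length_toList, Finset.card_sdiff_of_subset hJΔ]
    have := Finset.card_le_card hJΔ
    omega
  · rw [List.mem_append, hLJ_mem, hLK_mem]
    by_cases hx : x ∈ J
    · simp [hx, hJΔ hx]
    · simp [hx]
  · rw [← hLJ_len]
    exact List.getElem_append_mem_iff (fun x hx => (hLJ_mem x).mp hx)
      (fun x hx => ((hLK_mem x).mp hx).2) hi
  · refine List.pairwise_append.mpr ⟨hLJ_sorted.imp fun {_ y} h (_ : y ∈ J) => h, ?_, ?_⟩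
    · exact List.pairwise_of_forall_mem_list fun _ _ y hy hyJ => absurd hyJ ((hLK_mem y).mp hy).2
    · exact fun _ _ y hy hyJ => absurd hyJ ((hLK_mem y).mp hy).2

theorem exists_enumeration_of_rank [DecidableEq α] [Inhabited α] (r : α → α → Prop)
    {Δ J : Finset α} (hJΔ : J ⊆ Δ) (d : α → ℕ) (hd : ∀ a ∈ J, ∃ c ∈ Δ, r a c ∧ d c < d a) :
    ∃ b : ℕ → α,
      (∀ i < Δ.card, b i ∈ Δ) ∧
      (∀ i < Δ.card, ∀ j < Δ.card, b i = b j → i = j) ∧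
      (∀ a ∈ Δ, ∃ i < Δ.card, b i = a) ∧
      (∀ i < Δ.card, (b i ∈ J ↔ i < J.card)) ∧
      (∀ i < Δ.card, b i ∈ J → ∃ k < Δ.card, i < k ∧ r (b i) (b k)) := by
  obtain ⟨L, hL_nodup, hL_len, hL_mem, hL_prefix, hL_sorted⟩ :=
    Finset.exists_list_prefix_sorted hJΔ d
  rw [← hL_len]
  obtain ⟨b, hb⟩ : ∃ b : ℕ → α, ∀ i (hi : i < L.length), b i = L[i] :=
    ⟨fun i => L.getD i default, fun i hi => List.getD_eq_getElem _ _ hi⟩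
  refine ⟨b, fun i hi => ?_, fun i hi j hj hij => ?_, fun a ha => ?_, fun i hi => ?_,
    fun i hi hJi => ?_⟩
  · rw [hb i hi, ← hL_mem]
    exact List.getElem_mem hi
  · rwa [hb i hi, hb j hj, hL_nodup.getElem_inj_iff] at hij
  · obtain ⟨i, hi, rfl⟩ := List.mem_iff_getElem.mp ((hL_mem a).mpr ha)
    exact ⟨i, hi, hb i hi⟩
  · rw [hb i hi, hL_prefix]
  · rw [hb i hi] at hJi ⊢
    obtain ⟨c, hcΔ, hic, hdc⟩ := hd _ hJi
    obtain ⟨k, hk, rfl⟩ := List.mem_iff_getElem.mp ((hL_mem c).mpr hcΔ)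
    refine ⟨k, hk, ?_, by rwa [hb k hk]⟩
    by_contra hki
    rcases (Nat.not_lt.mp hki).lt_or_eq with hki | rfl
    · have := List.pairwise_iff_getElem.mp hL_sorted k i hk hi hki hJi
      omega
    · exact lt_irrefl _ hdc

end Enumeration

section DualFamily

variable {K V : Type*} [DivisionRing K] [AddCommGroup V] [Module K V]

theorem LinearIndepOn.exists_dual_family {s : Set V} (hs : LinearIndepOn K id s) :
    ∃ φ : V → V →ₗ[K] K, (∀ x ∈ s, φ x x = 1) ∧ (∀ x ∈ s, ∀ y ∈ s, x ≠ y → φ x y = 0) := by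
  classical
  let B := Module.Basis.extend hs
  have hrepr : ∀ y (hy : y ∈ hs.extend (Set.subset_univ s)), B.repr y = Finsupp.single ⟨y, hy⟩ 1 :=
    fun y hy => by simpa [B, Module.Basis.extend_apply_self] using B.repr_self ⟨y, hy⟩
  refine ⟨fun x => if hx : x ∈ hs.extend (Set.subset_univ s) then B.coord ⟨x, hx⟩ else 0,
    fun x hx => ?_, fun x hx y hy hxy => ?_⟩
  · have hx' := hs.subset_extend (Set.subset_univ s) hx
    simp [dif_pos hx', hrepr x hx']
  · have hx' := hs.subset_extend (Set.subset_univ s) hx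
    simp [dif_pos hx', hrepr y (hs.subset_extend (Set.subset_univ s) hy), Ne.symm hxy]

variable {φ : V → V →ₗ[K] K}

theorem dual_family_apply_sum {s : Finset V} (hφ_self : ∀ x ∈ s, φ x x = 1)
    (hφ_ne : ∀ x ∈ s, ∀ y ∈ s, x ≠ y → φ x y = 0) {x : V} (hx : x ∈ s) (c : V → K) :
    φ x (∑ y ∈ s, c y • y) = c x := by
  rw [map_sum, Finset.sum_eq_single_of_mem x hx]
  · rw [map_smul, hφ_self x hx, smul_eq_mul, mul_one]
  · intro y hy hyx
    rw [map_smul, hφ_ne x hx y hy (Ne.symm hyx), smul_zero]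

theorem dual_family_eq_zero_of_mem_span {s t : Set V}
    (hφ_ne : ∀ x ∈ s, ∀ y ∈ s, x ≠ y → φ x y = 0) (hts : t ⊆ s) {x y : V}
    (hx : x ∈ s) (hxt : x ∉ t) (hy : y ∈ Submodule.span K t) : φ x y = 0 := by
  have hspan : Submodule.span K t ≤ LinearMap.ker (φ x) :=
    Submodule.span_le.mpr fun z hz =>
      hφ_ne x hx z (hts hz) (by rintro rfl; exact hxt hz)
  exact hspan hy

end DualFamily

namespace ReducedCrystRootSystem

variable {V : Type*} [AddCommGroup V] [Module ℚ V] (R : ReducedCrystRootSystem V)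

structure IsBaseWithCoords (Δ : Finset V) (φ : V → V →ₗ[ℚ] ℚ) : Prop where
  mem_roots : ∀ α ∈ Δ, α ∈ R.roots
  coord_self : ∀ α ∈ Δ, φ α α = 1
  coord_of_ne : ∀ α ∈ Δ, ∀ β ∈ Δ, α ≠ β → φ α β = 0
  eq_sum_coord : ∀ ρ ∈ R.roots, ρ = ∑ γ ∈ Δ, φ γ ρ • γ
  coord_sign : ∀ ρ ∈ R.roots, (∀ γ ∈ Δ, 0 ≤ φ γ ρ) ∨ (∀ γ ∈ Δ, φ γ ρ ≤ 0)

variable {R} {Δ : Finset V} {φ : V → V →ₗ[ℚ] ℚ} {b : ℕ → V} {n N i : ℕ}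

theorem isBaseWithCoords_of_coords (hmem : ∀ α ∈ Δ, α ∈ R.roots)
    (hφ_self : ∀ α ∈ Δ, φ α α = 1) (hφ_ne : ∀ α ∈ Δ, ∀ β ∈ Δ, α ≠ β → φ α β = 0)
    (hcoords : ∀ β ∈ R.roots, ∃ c : V → ℤ,
      ((∀ α, 0 ≤ c α) ∨ (∀ α, c α ≤ 0)) ∧ β = ∑ α ∈ Δ, (c α : ℚ) • α) :
    R.IsBaseWithCoords Δ φ where
  mem_roots := hmem
  coord_self := hφ_self
  coord_of_ne := hφ_ne
  eq_sum_coord ρ hρ := by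
    obtain ⟨c, -, hc⟩ := hcoords ρ hρ
    conv_lhs => rw [hc]
    exact Finset.sum_congr rfl fun γ hγ => by rw [hc, dual_family_apply_sum hφ_self hφ_ne hγ]
  coord_sign ρ hρ := by
    obtain ⟨c, hsign, hc⟩ := hcoords ρ hρ
    have hcoord : ∀ γ ∈ Δ, φ γ ρ = c γ := fun γ hγ => by
      rw [hc, dual_family_apply_sum hφ_self hφ_ne hγ]
    rcases hsign with h | h
    · exact Or.inl fun γ hγ => by rw [hcoord γ hγ]; exact_mod_cast h γ
    · exact Or.inr fun γ hγ => by rw [hcoord γ hγ]; exact_mod_cast h γ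

theorem coord_refl (f : V →ₗ[ℚ] ℚ) (α x : V) :
    f (R.refl α x) = f x - R.coroot α x * f α := by
  rw [refl, map_sub, map_smul, smul_eq_mul]

theorem beta_of_le (h : N ≤ i + 1) : R.beta b N i = b i := by
  simp [beta, Nat.sub_eq_zero_of_le h]

theorem beta_succ (h : i < N) : R.beta b (N + 1) i = R.refl (b N) (R.beta b N i) := by
  have hlen : N + 1 - (i + 1) = N - (i + 1) + 1 := by omega
  have hlast : i + 1 + (N - (i + 1)) = N := by omega
  simp only [beta, hlen, List.range'_concat, List.foldl_append, List.foldl_cons,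
    List.foldl_nil, Nat.one_mul, hlast]

theorem beta_mem_roots (hb : ∀ j < n, b j ∈ R.roots) (hi : i < n) (hN : N ≤ n) :
    R.beta b N i ∈ R.roots := by
  induction N with
  | zero => rw [beta_of_le (Nat.zero_le _)]; exact hb i hi
  | succ N ih =>
    rcases le_or_gt N i with hNi | hiN
    · rw [beta_of_le (by omega)]
      exact hb i hi
    · rw [beta_succ hiN]
      exact R.reflect_mem _ (hb N (by omega)) _ (ih (by omega))

namespace IsBaseWithCoords

theorem coroot_nonpos_of_ne (hB : R.IsBaseWithCoords Δ φ) {α γ : V} (hα : α ∈ Δ)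
    (hγ : γ ∈ Δ) (hne : γ ≠ α) : R.coroot α γ ≤ 0 := by
  have hρ : R.refl α γ ∈ R.roots := R.reflect_mem α (hB.mem_roots α hα) γ (hB.mem_roots γ hγ)
  have hγρ : φ γ (R.refl α γ) = 1 := by
    rw [coord_refl, hB.coord_self γ hγ, hB.coord_of_ne γ hγ α hα hne, mul_zero, sub_zero]
  have hαρ : φ α (R.refl α γ) = -R.coroot α γ := by
    rw [coord_refl, hB.coord_of_ne α hα γ hγ hne.symm, hB.coord_self α hα]
    ring
  rcases hB.coord_sign _ hρ with h | h
  · linarith [h α hα]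
  · linarith [h γ hγ]

theorem coroot_eq_zero_of_coroot_eq_zero (hB : R.IsBaseWithCoords Δ φ) {α γ : V}
    (hα : α ∈ Δ) (hγ : γ ∈ Δ) (hne : γ ≠ α) (h : R.coroot γ α = 0) : R.coroot α γ = 0 := by
  -- otherwise `s_γ s_α γ = -γ - ⟨γ, α̌⟩ α` would have coefficients of both signs
  by_contra hne0
  have hneg : R.coroot α γ < 0 := lt_of_le_of_ne (hB.coroot_nonpos_of_ne hα hγ hne) hne0
  have hρ₁ : R.refl α γ ∈ R.roots :=
    R.reflect_mem α (hB.mem_roots α hα) γ (hB.mem_roots γ hγ)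
  have hρ : R.refl γ (R.refl α γ) ∈ R.roots := R.reflect_mem γ (hB.mem_roots γ hγ) _ hρ₁
  have hcor : R.coroot γ (R.refl α γ) = 2 := by
    rw [refl, map_sub, map_smul, R.coroot_self γ (hB.mem_roots γ hγ), h, smul_zero, sub_zero]
  have hγρ : φ γ (R.refl γ (R.refl α γ)) = -1 := by
    rw [coord_refl, hcor, coord_refl, hB.coord_self γ hγ, hB.coord_of_ne γ hγ α hα hne]
    ring
  have hαρ : φ α (R.refl γ (R.refl α γ)) = -R.coroot α γ := by
    rw [coord_refl, coord_refl, hB.coord_of_ne α hα γ hγ hne.symm, hB.coord_self α hα]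
    ring
  rcases hB.coord_sign _ hρ with h | h
  · linarith [h γ hγ]
  · linarith [h α hα]

theorem coroot_neg_of_adj (hB : R.IsBaseWithCoords Δ φ) {x y : V}
    (hadj : R.DynkinAdj Δ x y ∨ R.DynkinAdj Δ y x) : R.coroot y x < 0 := by
  rcases hadj with ⟨hx, hy, hne, h⟩ | ⟨hy, hx, hne, h⟩
  · exact lt_of_le_of_ne (hB.coroot_nonpos_of_ne hy hx hne) h
  · exact lt_of_le_of_ne (hB.coroot_nonpos_of_ne hy hx hne.symm)
      fun h0 => h (hB.coroot_eq_zero_of_coroot_eq_zero hx hy hne h0)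

theorem coroot_neg_of_coord_pos (hB : R.IsBaseWithCoords Δ φ) {α γ W : V}
    (hW : W ∈ R.roots) (hα : α ∈ Δ) (hWα : φ α W = 0) (hγ : γ ∈ Δ) (hWγ : 0 < φ γ W)
    (hαγ : R.coroot α γ < 0) : R.coroot α W < 0 := by
  classical
  have hWnonneg : ∀ β ∈ Δ, 0 ≤ φ β W :=
    (hB.coord_sign W hW).resolve_right fun h => (h γ hγ).not_gt hWγ
  rw [hB.eq_sum_coord W hW, map_sum, ← Finset.sum_erase_add _ _ hγ]
  have hrest : ∑ β ∈ Δ.erase γ, R.coroot α (φ β W • β) ≤ 0 := by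
    refine Finset.sum_nonpos fun β hβ => ?_
    rw [map_smul, smul_eq_mul]
    rcases eq_or_ne β α with rfl | hβα
    · rw [hWα, zero_mul]
    · have hβΔ := Finset.mem_of_mem_erase hβ
      exact mul_nonpos_of_nonneg_of_nonpos (hWnonneg β hβΔ)
        (hB.coroot_nonpos_of_ne hα hβΔ hβα)
  have hγterm : R.coroot α (φ γ W • γ) < 0 := by
    rw [map_smul, smul_eq_mul]
    exact mul_neg_of_pos_of_neg hWγ hαγ
  linarith

theorem coord_beta_succ (hB : R.IsBaseWithCoords Δ φ) (hb : ∀ j < n, b j ∈ Δ)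
    (hinj : ∀ j < n, ∀ k < n, b j = b k → j = k) {k : ℕ} (hk : k < n) (hiN : i < N)
    (hN : N < n) (hkN : k ≠ N) :
    φ (b k) (R.beta b (N + 1) i) = φ (b k) (R.beta b N i) := by
  rw [beta_succ hiN, coord_refl, hB.coord_of_ne _ (hb k hk) _ (hb N hN)
    fun h => hkN (hinj k hk N hN h), mul_zero, sub_zero]

theorem coord_beta_of_le (hB : R.IsBaseWithCoords Δ φ) (hb : ∀ j < n, b j ∈ Δ)
    (hinj : ∀ j < n, ∀ k < n, b j = b k → j = k) {k N' : ℕ} (hiN : i < N) (hkN : k < N)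
    (hNN' : N ≤ N') (hN' : N' ≤ n) :
    φ (b k) (R.beta b N' i) = φ (b k) (R.beta b N i) := by
  induction N', hNN' using Nat.le_induction with
  | base => rfl
  | succ N' hNN' ih =>
    rw [hB.coord_beta_succ hb hinj (by omega) (by omega) (by omega) (by omega), ih (by omega)]

theorem coord_beta_eq_zero (hB : R.IsBaseWithCoords Δ φ) (hb : ∀ j < n, b j ∈ Δ)
    (hinj : ∀ j < n, ∀ k < n, b j = b k → j = k) {k : ℕ} (hk : k < n) (hik : i < k)
    (hNk : N ≤ k) : φ (b k) (R.beta b N i) = 0 := by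
  have hki : φ (b k) (b i) = 0 :=
    hB.coord_of_ne _ (hb k hk) _ (hb i (by omega)) fun h => (hinj k hk i (by omega) h).not_gt hik
  induction N with
  | zero => rwa [beta_of_le (Nat.zero_le _)]
  | succ N ih =>
    rcases le_or_gt N i with hNi | hiN
    · rwa [beta_of_le (by omega)]
    · rw [hB.coord_beta_succ hb hinj hk hiN (by omega) (by omega), ih (by omega)]

theorem coord_beta_self (hB : R.IsBaseWithCoords Δ φ) (hb : ∀ j < n, b j ∈ Δ)
    (hinj : ∀ j < n, ∀ k < n, b j = b k → j = k) (hiN : i < N) (hN : N ≤ n) :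
    φ (b i) (R.beta b N i) = 1 := by
  rw [hB.coord_beta_of_le hb hinj (Nat.lt_succ_self i) (Nat.lt_succ_self i) hiN hN,
    beta_of_le le_rfl, hB.coord_self _ (hb i (by omega))]

theorem coord_beta_pos_of_adj (hB : R.IsBaseWithCoords Δ φ) (hb : ∀ j < n, b j ∈ Δ)
    (hinj : ∀ j < n, ∀ k < n, b j = b k → j = k) {j k : ℕ} (hij : i ≤ j) (hjk : j < k)
    (hk : k < n) (hadj : R.DynkinAdj Δ (b j) (b k) ∨ R.DynkinAdj Δ (b k) (b j))
    (hpos : 0 < φ (b j) (R.beta b (j + 1) i)) :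
    0 < φ (b k) (R.beta b (k + 1) i) := by
  have hW : R.beta b k i ∈ R.roots :=
    beta_mem_roots (fun j hj => hB.mem_roots _ (hb j hj)) (by omega) hk.le
  have hWk : φ (b k) (R.beta b k i) = 0 := hB.coord_beta_eq_zero hb hinj hk (by omega) le_rfl
  have hWj : 0 < φ (b j) (R.beta b k i) := by
    rwa [hB.coord_beta_of_le hb hinj (N := j + 1) (by omega) (by omega) (by omega) hk.le]
  have hneg : R.coroot (b k) (R.beta b k i) < 0 :=
    hB.coroot_neg_of_coord_pos hW (hb k hk) hWk (hb j (by omega)) hWj (hB.coroot_neg_of_adj hadj)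
  rw [beta_succ (by omega), coord_refl, hWk, hB.coord_self _ (hb k hk)]
  linarith

theorem exists_notMem_coord_beta_pos (hB : R.IsBaseWithCoords Δ φ) (hb : ∀ j < n, b j ∈ Δ)
    (hinj : ∀ j < n, ∀ k < n, b j = b k → j = k) {J : Set V}
    (hlater : ∀ j < n, b j ∈ J →
      ∃ k < n, j < k ∧ (R.DynkinAdj Δ (b j) (b k) ∨ R.DynkinAdj Δ (b k) (b j)))
    {j : ℕ} (hij : i ≤ j) (hj : j < n) (hpos : 0 < φ (b j) (R.beta b (j + 1) i)) :
    ∃ k < n, b k ∉ J ∧ 0 < φ (b k) (R.beta b n i) := by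
  by_cases hJ : b j ∈ J
  · obtain ⟨k, hk, hjk, hadj⟩ := hlater j hj hJ
    exact hB.exists_notMem_coord_beta_pos hb hinj hlater (hij.trans hjk.le) hk
      (hB.coord_beta_pos_of_adj hb hinj hij hjk hk hadj hpos)
  · refine ⟨j, hj, hJ, ?_⟩
    rwa [hB.coord_beta_of_le hb hinj (N := j + 1) (by omega) (Nat.lt_succ_self j) hj le_rfl]
termination_by n - j

end IsBaseWithCoords

end ReducedCrystRootSystem

theorem stmt8 {V : Type*} [AddCommGroup V] [Module ℚ V]
    (R : ReducedCrystRootSystem V) (Δ J : Finset V) {n m : ℕ}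
    (hΔcard : Δ.card = n) (hJcard : J.card = m) (hJΔ : J ⊆ Δ)
    -- `Δ` is a base of the root system:
    (hmem : ∀ α ∈ Δ, α ∈ R.roots)
    (hindep : LinearIndependent ℚ (fun α : (Δ : Set V) => (α : V)))
    (hcoords : ∀ β ∈ R.roots, ∃ c : V → ℤ,
      ((∀ α, 0 ≤ c α) ∨ (∀ α, c α ≤ 0)) ∧ β = ∑ α ∈ Δ, (c α : ℚ) • α)
    -- no connected component of the Dynkin graph of `Δ` is entirely contained in `J`:
    (hconn : ∀ α ∈ Δ, ∃ β ∈ Δ, β ∉ J ∧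
      Relation.ReflTransGen
        (fun x y => R.DynkinAdj Δ x y ∨ R.DynkinAdj Δ y x) α β) :
    ∃ b : ℕ → V,
      (∀ i < n, b i ∈ Δ) ∧
      (∀ i < n, ∀ j < n, b i = b j → i = j) ∧
      (∀ α ∈ Δ, ∃ i < n, b i = α) ∧
      (∀ i < n, (b i ∈ J ↔ i < m)) ∧
      (∀ i < n,
        ¬(R.beta b n i ∈ R.roots ∧
          R.beta b n i ∈ Submodule.span ℚ (J : Set V))) := by
  classical
  have : Inhabited V := ⟨0⟩
  subst hΔcard hJcard
  obtain ⟨φ, hφ_self, hφ_ne⟩ := LinearIndepOn.exists_dual_family (K := ℚ) hindep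
  have hB : R.IsBaseWithCoords Δ φ :=
    ReducedCrystRootSystem.isBaseWithCoords_of_coords hmem hφ_self hφ_ne hcoords
  obtain ⟨d, hd⟩ := exists_rank_descent (fun x y => R.DynkinAdj Δ x y ∨ R.DynkinAdj Δ y x)
    (fun c => c ∈ Δ ∧ c ∉ J)
  have hdescent : ∀ a ∈ J, ∃ c ∈ Δ, (R.DynkinAdj Δ a c ∨ R.DynkinAdj Δ c a) ∧ d c < d a := by
    intro a ha
    obtain ⟨β, hβΔ, hβJ, hpath⟩ := hconn a (hJΔ ha)
    obtain ⟨c, hac, hdc⟩ := hd a β ⟨hβΔ, hβJ⟩ hpath fun h => h.2 ha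
    exact ⟨c, hac.elim (·.2.1) (·.1), hac, hdc⟩
  obtain ⟨b, hbΔ, hinj, hsurj, hbJ, hlater⟩ := exists_enumeration_of_rank _ hJΔ d hdescent
  refine ⟨b, hbΔ, hinj, hsurj, hbJ, fun i hi ⟨_, hspan⟩ => ?_⟩
  obtain ⟨k, hk, hkJ, hpos⟩ := hB.exists_notMem_coord_beta_pos hbΔ hinj hlater le_rfl hi
    (by rw [hB.coord_beta_self hbΔ hinj (Nat.lt_succ_self i) hi]; exact one_pos)
  exact hpos.ne' (dual_family_eq_zero_of_mem_span hφ_ne hJΔ (hbΔ k hk) hkJ hspan)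
end
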